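/- arXiv:2105.14561 — 11 statements merged into one kernel-verified Lean document; each statement's English description precedes it below -/
import Mathlib

section
/- Let H: ℝ → ℝ be a polynomial and k ≥ 0 an integer. Suppose g : (0,∞) → ℝ is a smooth function with g(s) > 0 and g'(s) > 0 for all s > 0, satisfying g(s)^k · g'(s) / H(g(s)) = 1/s for all s > 0. Let A = lim_{s→0⁺} g(s) and suppose B = lim_{s→∞} g(s) is finite. Then H(A) = 0, H(B) = 0, and H(x) > 0 for all x ∈ (A, B). -/
open Set Filter

private lemma key_mono (φ : ℝ → ℝ) (c a b : ℝ) (ha : 0 < a) (hab : a ≤ b)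
    (hd : ∀ s ∈ Icc a b, ∃ d, HasDerivAt φ d s ∧ c / s ≤ d) :
    φ a + c * (Real.log b - Real.log a) ≤ φ b := by
  have hψd : ∀ s ∈ Icc a b, ∃ d, HasDerivAt (fun t => φ t - c * Real.log t) d s ∧ 0 ≤ d := by
    intro s hs
    obtain ⟨d, hd1, hd2⟩ := hd s hs
    have hs0 : 0 < s := lt_of_lt_of_le ha hs.1
    refine ⟨d - c * s⁻¹, hd1.sub ((Real.hasDerivAt_log hs0.ne').const_mul c), ?_⟩
    rw [div_eq_mul_inv] at hd2
    linarith
  have hmono : MonotoneOn (fun t => φ t - c * Real.log t) (Icc a b) := by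
    apply monotoneOn_of_deriv_nonneg (convex_Icc a b)
    · intro s hs
      obtain ⟨d, hd1, _⟩ := hψd s hs
      exact hd1.continuousAt.continuousWithinAt
    · intro s hs
      obtain ⟨d, hd1, _⟩ := hψd s (interior_subset hs)
      exact hd1.differentiableAt.differentiableWithinAt
    · intro s hs
      obtain ⟨d, hd1, hd0⟩ := hψd s (interior_subset hs)
      rw [hd1.deriv]; exact hd0
  have := hmono (left_mem_Icc.mpr hab) (right_mem_Icc.mpr hab) hab
  simp only [] at this
  linarith

theorem stmt_0 (H : Polynomial ℝ) (k : ℕ) (g : ℝ → ℝ)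
    (hsm : ContDiffOn ℝ (⊤ : ℕ∞) g (Ioi 0))
    (hpos : ∀ s ∈ Ioi (0:ℝ), 0 < g s)
    (hderiv : ∀ s ∈ Ioi (0:ℝ), 0 < deriv g s)
    (hode : ∀ s ∈ Ioi (0:ℝ), g s ^ k * deriv g s / H.eval (g s) = 1 / s)
    (A B : ℝ)
    (hA : Tendsto g (nhdsWithin 0 (Ioi 0)) (nhds A))
    (hB : Tendsto g atTop (nhds B)) :
    H.eval A = 0 ∧ H.eval B = 0 ∧ ∀ x ∈ Ioo A B, 0 < H.eval x := by
  -- positivity of H along g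
  have hHpos : ∀ s ∈ Ioi (0:ℝ), 0 < H.eval (g s) := by
    intro s hs
    have hs0 : (0:ℝ) < s := hs
    have hnum : 0 < g s ^ k * deriv g s := mul_pos (pow_pos (hpos s hs) k) (hderiv s hs)
    have h := hode s hs
    rcases lt_trichotomy (H.eval (g s)) 0 with hlt | heq | hgt
    · have : g s ^ k * deriv g s / H.eval (g s) < 0 := div_neg_of_pos_of_neg hnum hlt
      have h1 : (0:ℝ) < 1 / s := by positivity
      linarith [h ▸ this]
    · rw [heq, div_zero] at h
      have h1 : (0:ℝ) < 1 / s := by positivity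
      linarith
    · exact hgt
  -- key identity
  have hkey : ∀ s ∈ Ioi (0:ℝ), g s ^ k * deriv g s = H.eval (g s) / s := by
    intro s hs
    have hs0 : (0:ℝ) < s := hs
    have hH0 : H.eval (g s) ≠ 0 := (hHpos s hs).ne'
    have h := hode s hs
    field_simp at h ⊢
    linarith
  -- the antiderivative φ
  set φ : ℝ → ℝ := fun t => g t ^ (k+1) / ((k:ℝ)+1) with hφdef
  have hk1 : ((k:ℝ)+1) ≠ 0 := by positivity
  have hφd : ∀ s ∈ Ioi (0:ℝ), HasDerivAt φ (H.eval (g s) / s) s := by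
    intro s hs
    have hgd : HasDerivAt g (deriv g s) s :=
      ((hsm.differentiableOn (by simp)).differentiableAt (isOpen_Ioi.mem_nhds hs)).hasDerivAt
    have h1 : HasDerivAt (fun t => g t ^ (k+1)) (((k:ℝ)+1) * g s ^ k * deriv g s) s := by
      simpa [Nat.add_sub_cancel] using hgd.fun_pow (k+1)
    have h2 := h1.div_const ((k:ℝ)+1)
    have heq : ((k:ℝ)+1) * g s ^ k * deriv g s / ((k:ℝ)+1) = H.eval (g s) / s := by
      rw [← hkey s hs]; field_simp
    rw [heq] at h2
    exact h2
  have hφpos : ∀ s ∈ Ioi (0:ℝ), 0 < φ s := by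
    intro s hs
    have := hpos s hs
    positivity
  -- existential form for key_mono
  have hdbound : ∀ c a b : ℝ, 0 < a → (∀ s ∈ Icc a b, c ≤ H.eval (g s)) →
      ∀ s ∈ Icc a b, ∃ d, HasDerivAt φ d s ∧ c / s ≤ d := by
    intro c a b ha hc s hs
    have hs0 : 0 < s := lt_of_lt_of_le ha hs.1
    refine ⟨H.eval (g s) / s, hφd s hs0, ?_⟩
    gcongr
    exact hc s hs
  -- H(A) ≥ 0 and H(B) ≥ 0
  have hcompA : Tendsto (fun s => H.eval (g s)) (nhdsWithin 0 (Ioi 0)) (nhds (H.eval A)) :=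
    (H.continuous.tendsto A).comp hA
  have hcompB : Tendsto (fun s => H.eval (g s)) atTop (nhds (H.eval B)) :=
    (H.continuous.tendsto B).comp hB
  have hA0 : 0 ≤ H.eval A :=
    ge_of_tendsto hcompA (eventually_nhdsWithin_of_forall fun s hs => (hHpos s hs).le)
  have hB0 : 0 ≤ H.eval B := by
    refine ge_of_tendsto hcompB ?_
    filter_upwards [eventually_gt_atTop (0:ℝ)] with s hs
    exact (hHpos s hs).le
  -- H(A) = 0
  have hAzero : H.eval A = 0 := by
    by_contra hne
    have hApos : 0 < H.eval A := lt_of_le_of_ne hA0 (Ne.symm hne)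
    set c := H.eval A / 2 with hcdef
    have hc : 0 < c := by positivity
    have hev : ∀ᶠ s in nhdsWithin 0 (Ioi 0), c < H.eval (g s) :=
      hcompA (Ioi_mem_nhds (by simp only [hcdef]; linarith))
    obtain ⟨u, hu, hsub⟩ := mem_nhdsGT_iff_exists_Ioo_subset.mp hev
    have hu0 : (0:ℝ) < u := hu
    set b := u / 2 with hbdef
    have hb0 : 0 < b := by positivity
    have hbu : b < u := by simp only [hbdef]; linarith
    have hφb : 0 < φ b := hφpos b hb0
    set t := b * Real.exp (-(φ b / c)) / 2 with htdef
    have ht0 : 0 < t := by positivity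
    have hexp : Real.exp (-(φ b / c)) ≤ 1 := by
      rw [Real.exp_le_one_iff]
      have : 0 ≤ φ b / c := by positivity
      linarith
    have htb : t ≤ b := by
      have : b * Real.exp (-(φ b / c)) ≤ b * 1 :=
        mul_le_mul_of_nonneg_left hexp hb0.le
      simp only [htdef]; nlinarith
    have hbound : ∀ s ∈ Icc t b, c ≤ H.eval (g s) := by
      intro s hs
      have hs0 : 0 < s := lt_of_lt_of_le ht0 hs.1
      exact (hsub ⟨hs0, lt_of_le_of_lt hs.2 hbu⟩).le
    have := key_mono φ c t b ht0 htb (hdbound c t b ht0 hbound)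
    have hlogt : Real.log t = Real.log b + (-(φ b / c)) - Real.log 2 := by
      rw [htdef, Real.log_div (by positivity) (by norm_num),
        Real.log_mul hb0.ne' (Real.exp_pos _).ne', Real.log_exp]
    have hφt : 0 < φ t := hφpos t ht0
    have hlog2 : 0 < Real.log 2 := Real.log_pos (by norm_num)
    have hcalc : c * (Real.log b - Real.log t) = φ b + c * Real.log 2 := by
      rw [hlogt]; field_simp; ring
    nlinarith [hcalc]
  -- H(B) = 0
  have hBzero : H.eval B = 0 := by
    by_contra hne
    have hBpos : 0 < H.eval B := lt_of_le_of_ne hB0 (Ne.symm hne)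
    set c := H.eval B / 2 with hcdef
    have hc : 0 < c := by positivity
    have hev : ∀ᶠ s in atTop, c < H.eval (g s) :=
      hcompB (Ioi_mem_nhds (by simp only [hcdef]; linarith))
    obtain ⟨s₀', hs₀'⟩ := eventually_atTop.mp hev
    set s₀ := max s₀' 1 with hs₀def
    have hs₀0 : (0:ℝ) < s₀ := lt_of_lt_of_le one_pos (le_max_right _ _)
    have hbound : ∀ b, s₀ ≤ b → φ s₀ + c * (Real.log b - Real.log s₀) ≤ φ b := by
      intro b hb
      refine key_mono φ c s₀ b hs₀0 hb (hdbound c s₀ b hs₀0 ?_)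
      intro s hs
      exact (hs₀' s (le_trans (le_max_left _ _) hs.1)).le
    -- lower bound tends to atTop
    have hlow : Tendsto (fun b => φ s₀ + c * (Real.log b - Real.log s₀)) atTop atTop := by
      apply tendsto_atTop_add_const_left
      apply Tendsto.const_mul_atTop hc
      exact tendsto_atTop_add_const_right _ _ Real.tendsto_log_atTop
    have hφtop : Tendsto φ atTop atTop :=
      tendsto_atTop_mono' atTop (eventually_atTop.mpr ⟨s₀, hbound⟩) hlow
    have hφnhds : Tendsto φ atTop (nhds (B ^ (k+1) / ((k:ℝ)+1))) :=
      (((continuous_pow (k+1)).div_const ((k:ℝ)+1)).tendsto B).comp hB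
    exact not_tendsto_nhds_of_tendsto_atTop hφtop _ hφnhds
  refine ⟨hAzero, hBzero, ?_⟩
  -- positivity on (A, B)
  intro x hx
  have h1 : ∀ᶠ s in nhdsWithin 0 (Ioi 0), g s < x := hA (Iio_mem_nhds hx.1)
  obtain ⟨s₁, hs₁x, hs₁pos⟩ := (h1.and eventually_mem_nhdsWithin).exists
  have h2 : ∀ᶠ s in atTop, x < g s := hB (Ioi_mem_nhds hx.2)
  obtain ⟨s₂, hs₂x, hs₂ge⟩ := (h2.and (eventually_ge_atTop (s₁ + 1))).exists
  have hs12 : s₁ ≤ s₂ := by linarith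
  have hcont : ContinuousOn g (Icc s₁ s₂) :=
    hsm.continuousOn.mono (fun y hy => lt_of_lt_of_le hs₁pos hy.1)
  have hmem : x ∈ Ioo (g s₁) (g s₂) := ⟨hs₁x, hs₂x⟩
  obtain ⟨s, hsmem, hgs⟩ := intermediate_value_Ioo hs12 hcont hmem
  have hs0 : s ∈ Ioi (0:ℝ) := lt_trans hs₁pos hsmem.1
  rw [← hgs]
  exact hHpos s hs0
end

section
/- Let H: ℝ → ℝ be a polynomial of degree m and k ≥ 0 an integer. Suppose g : (0,∞) → ℝ is smooth with g(s) > 0, g'(s) > 0, satisfying s·g(s)^k·g'(s) = H(g(s)) for all s > 0. If lim_{s→∞} g(s) = +∞, then deg H ≤ k + 1. -/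
open Set Filter

theorem stmt_1 (H : Polynomial ℝ) (k : ℕ) (g : ℝ → ℝ)
    (hsm : ContDiffOn ℝ (⊤ : ℕ∞) g (Ioi 0))
    (hpos : ∀ s ∈ Ioi (0:ℝ), 0 < g s)
    (hderiv : ∀ s ∈ Ioi (0:ℝ), 0 < deriv g s)
    (hode : ∀ s ∈ Ioi (0:ℝ), s * g s ^ k * deriv g s = H.eval (g s))
    (hB : Tendsto g atTop atTop) :
    H.natDegree ≤ k + 1 := by
  by_contra hcon
  push_neg at hcon
  -- H.eval (g s) > 0 for s > 0
  have hHpos : ∀ s ∈ Ioi (0:ℝ), 0 < H.eval (g s) := fun s hs => by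
    rw [← hode s hs]
    exact mul_pos (mul_pos (mem_Ioi.mp hs) (pow_pos (hpos s hs) k)) (hderiv s hs)
  have hH0 : H ≠ 0 := by
    intro h
    have := hHpos 1 (by norm_num)
    rw [h] at this; simp at this
  have hdegpos : 0 < H.degree := by
    rw [← Polynomial.natDegree_pos_iff_degree_pos]
    omega
  -- leading coefficient is positive
  have ha : 0 < H.leadingCoeff := by
    rcases lt_trichotomy H.leadingCoeff 0 with h | h | h
    · exfalso
      have hbot := Polynomial.tendsto_atBot_of_leadingCoeff_nonpos H hdegpos h.le
      have h1 : ∀ᶠ s in atTop, H.eval (g s) < 0 :=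
        hB.eventually (hbot.eventually (eventually_lt_atBot 0))
      have h2 : ∀ᶠ s in atTop, (0:ℝ) < s := eventually_gt_atTop 0
      obtain ⟨s, hs1, hs2⟩ := (h1.and h2).exists
      exact absurd (hHpos s hs2) (not_lt.mpr hs1.le)
    · exact absurd (Polynomial.leadingCoeff_eq_zero.mp h) hH0
    · exact h
  set a := H.leadingCoeff with ha_def
  set c := a / 2 with hc_def
  have hcpos : 0 < c := by positivity
  -- eventually H.eval x ≥ c * x ^ (k+2)
  have hev : ∀ᶠ x in atTop, c * x ^ (k + 2) ≤ H.eval x := by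
    have h1 := (H.isEquivalent_atTop_lead).isLittleO
    have h2 := h1.def (by norm_num : (0:ℝ) < 1/2)
    filter_upwards [h2, eventually_ge_atTop (1:ℝ)] with x hx hx1
    have hxn : (0:ℝ) ≤ x ^ H.natDegree := pow_nonneg (by linarith) _
    have hnorm : ‖a * x ^ H.natDegree‖ = a * x ^ H.natDegree := by
      rw [Real.norm_eq_abs, abs_of_nonneg (by positivity)]
    simp only [Pi.sub_apply, hnorm, Real.norm_eq_abs] at hx
    have hx' : H.eval x - a * x ^ H.natDegree ≥ -(1/2 * (a * x ^ H.natDegree)) := by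
      have := abs_le.mp hx
      have habs : |H.leadingCoeff * x ^ H.natDegree| = H.leadingCoeff * x ^ H.natDegree := abs_of_nonneg (mul_nonneg ha.le hxn)
      rw [habs] at this
      show H.eval x - H.leadingCoeff * x ^ H.natDegree ≥ -(1/2 * (H.leadingCoeff * x ^ H.natDegree))
      linarith [this.1]
    have hpow : x ^ (k + 2) ≤ x ^ H.natDegree := pow_le_pow_right₀ hx1 (by omega)
    calc c * x ^ (k + 2) ≤ c * x ^ H.natDegree := by
          exact mul_le_mul_of_nonneg_left hpow hcpos.le
      _ ≤ H.eval x := by rw [hc_def]; linarith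
  obtain ⟨x0, hx0⟩ := eventually_atTop.mp hev
  obtain ⟨s1, hs1⟩ := eventually_atTop.mp (hB.eventually (eventually_ge_atTop x0))
  set s0 : ℝ := max s1 1 with hs0_def
  have hs0pos : 0 < s0 := lt_of_lt_of_le one_pos (le_max_right _ _)
  -- derivative facts on Ici s0
  have hgd : ∀ s ∈ Ioi (0:ℝ), HasDerivAt g (deriv g s) s := fun s hs =>
    (((hsm.differentiableOn (by norm_num)).differentiableAt (Ioi_mem_nhds hs))).hasDerivAt
  set w : ℝ → ℝ := fun s => (g s)⁻¹ + c * Real.log s with hw_def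
  have hwd : ∀ s ∈ Ici s0, HasDerivAt w (-(deriv g s) / (g s) ^ 2 + c * s⁻¹) s := by
    intro s hs
    have hsp : (0:ℝ) < s := lt_of_lt_of_le hs0pos hs
    have h1 := (hgd s hsp).inv (ne_of_gt (hpos s hsp))
    have h2 := (Real.hasDerivAt_log (ne_of_gt hsp)).const_mul c
    exact h1.add h2
  have hwneg : ∀ s ∈ Ici s0, -(deriv g s) / (g s) ^ 2 + c * s⁻¹ ≤ 0 := by
    intro s hs
    have hsp : (0:ℝ) < s := lt_of_lt_of_le hs0pos hs
    have hgp : 0 < g s := hpos s hsp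
    have hgx0 : x0 ≤ g s := hs1 s (le_trans (le_max_left _ _) hs)
    have hkey : c * (g s) ^ (k + 2) ≤ s * g s ^ k * deriv g s := by
      rw [hode s hsp]; exact hx0 (g s) hgx0
    have hpow : (g s) ^ (k + 2) = (g s) ^ 2 * (g s) ^ k := by ring
    have h2 : c * (g s) ^ 2 ≤ s * deriv g s := by
      have hk : (0:ℝ) < g s ^ k := pow_pos hgp k
      rw [hpow] at hkey
      have := (mul_le_mul_iff_left₀ hk).mp (by linarith [hkey] : c * (g s) ^ 2 * (g s) ^ k ≤ (s * deriv g s) * (g s) ^ k)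
      exact this
    have h3 : c * s⁻¹ ≤ deriv g s / (g s) ^ 2 := by
      rw [mul_comm c s⁻¹, inv_mul_eq_div, div_le_div_iff₀ hsp (pow_pos hgp 2)]
      linarith
    have : -(deriv g s) / (g s) ^ 2 = -(deriv g s / (g s) ^ 2) := by ring
    linarith [h3]
  have hanti : AntitoneOn w (Ici s0) := by
    apply antitoneOn_of_deriv_nonpos (convex_Ici s0)
    · exact fun s hs => (hwd s hs).continuousAt.continuousWithinAt
    · intro s hs
      rw [interior_Ici] at hs
      exact (hwd s (mem_Ici.mpr (le_of_lt (mem_Ioi.mp hs)))).differentiableAt.differentiableWithinAt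
    · intro s hs
      rw [interior_Ici] at hs
      rw [(hwd s (mem_Ici.mpr (mem_Ioi.mp hs).le)).deriv]
      exact hwneg s (mem_Ici.mpr (mem_Ioi.mp hs).le)
  -- contradiction
  set t : ℝ := max s0 (Real.exp ((w s0 + 1) / c)) with ht_def
  have hts0 : s0 ≤ t := le_max_left _ _
  have htpos : 0 < t := lt_of_lt_of_le hs0pos hts0
  have h1 : w t ≤ w s0 := hanti (self_mem_Ici) hts0 hts0
  have h2 : (w s0 + 1) / c ≤ Real.log t := by
    rw [← Real.log_exp ((w s0 + 1) / c)]
    exact Real.log_le_log (Real.exp_pos _) (le_max_right _ _)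
  have h3 : w s0 + 1 ≤ c * Real.log t := by
    rw [div_le_iff₀ hcpos] at h2; linarith
  have h4 : 0 < (g t)⁻¹ := inv_pos.mpr (hpos t htpos)
  have h5 : (g t)⁻¹ + c * Real.log t ≤ w s0 := h1
  clear_value t w s0 c a
  linarith
end

section
/- Fix β > 0 and let g : (0,∞) → (0,β) be a smooth strictly increasing solution of s·g'(s) = (1/β²)·g(s)·(g(s)−β)² with lim_{s→∞} g(s) = β. Then for any s₀ > 0, the integral ∫_{s₀}^{∞} √(g'(s)/s) ds diverges. -/
open Set Filter MeasureTheory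

theorem stmt_5 (β : ℝ) (hβ : 0 < β) (g : ℝ → ℝ)
    (hsm : ContDiffOn ℝ (⊤ : ℕ∞) g (Ioi 0))
    (hmono : StrictMonoOn g (Ioi 0))
    (hrange : ∀ s ∈ Ioi (0:ℝ), g s ∈ Ioo 0 β)
    (hode : ∀ s ∈ Ioi (0:ℝ), s * deriv g s = (1 / β ^ 2) * g s * (g s - β) ^ 2)
    (hlim : Tendsto g atTop (nhds β)) :
    ∀ s₀ : ℝ, 0 < s₀ →
      ¬ MeasureTheory.IntegrableOn (fun s => Real.sqrt (deriv g s / s)) (Ioi s₀) := by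
  intro s₀ hs₀ hint
  set F : ℝ → ℝ := fun s => -Real.sqrt β * Real.log (β - g s) with hFdef
  set F' : ℝ → ℝ := fun s => Real.sqrt β * deriv g s / (β - g s) with hF'def
  have hgdiff : ∀ s ∈ Ioi (0:ℝ), DifferentiableAt ℝ g s := fun s hs =>
    (hsm.differentiableOn (by simp)).differentiableAt (isOpen_Ioi.mem_nhds hs)
  have hdval : ∀ s ∈ Ioi (0:ℝ), deriv g s = g s * (β - g s) ^ 2 / (β ^ 2 * s) := by
    intro s hs
    have hsne : (s : ℝ) ≠ 0 := ne_of_gt hs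
    have h := hode s hs
    field_simp at h ⊢
    nlinarith [h]
  -- F has derivative F' on Ioi 0
  have hFderiv : ∀ s ∈ Ioi (0:ℝ), HasDerivAt F (F' s) s := by
    intro s hs
    have h
      : HasDerivAt (fun x => β - g x) (0 - deriv g s) s :=
      (hasDerivAt_const s β).sub ((hgdiff s hs).hasDerivAt)
    have hne : β - g s ≠ 0 := sub_ne_zero.mpr (ne_of_gt (hrange s hs).2)
    have := (h.log hne).const_mul (-Real.sqrt β)
    refine this.congr_deriv ?_
    simp only [hF'def]; ring
  -- F' is continuous on Ioi 0
  have hcont : ContinuousOn F' (Ioi 0) := by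
    have hdc : ContinuousOn (deriv g) (Ioi 0) :=
      hsm.continuousOn_deriv_of_isOpen isOpen_Ioi (by simp)
    have hgc : ContinuousOn g (Ioi 0) := hsm.continuousOn
    exact (continuousOn_const.mul hdc).div (continuousOn_const.sub hgc)
      (fun s hs => sub_ne_zero.mpr (ne_of_gt (hrange s hs).2))
  -- pointwise inequality F' ≤ integrand
  have hineq : ∀ s ∈ Ioi (0:ℝ), F' s ≤ Real.sqrt (deriv g s / s) := by
    intro s hs
    have hs' : (0:ℝ) < s := hs
    have hg0 : 0 < g s := (hrange s hs).1
    have hgβ : g s < β := (hrange s hs).2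
    have hd := hdval s hs
    have hgs : Real.sqrt (g s) ^ 2 = g s := Real.sq_sqrt hg0.le
    have hβs : Real.sqrt β ^ 2 = β := Real.sq_sqrt hβ.le
    have hkey : deriv g s / s = (Real.sqrt (g s) * (β - g s) / (β * s)) ^ 2 := by
      rw [hd, div_pow, mul_pow, hgs, mul_pow, div_div]
      ring
    have hfs : Real.sqrt (deriv g s / s) = Real.sqrt (g s) * (β - g s) / (β * s) := by
      rw [hkey, Real.sqrt_sq]
      exact div_nonneg (mul_nonneg (Real.sqrt_nonneg _) (by linarith)) (by positivity)
    rw [hfs]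
    have hne : β - g s ≠ 0 := sub_ne_zero.mpr (ne_of_gt hgβ)
    have hFs : F' s = Real.sqrt β * g s * (β - g s) / (β ^ 2 * s) := by
      rw [hF'def]
      simp only
      rw [hd]
      field_simp
    rw [hFs]
    rw [div_le_div_iff₀ (by positivity) (by positivity)]
    have hle : Real.sqrt (g s) ≤ Real.sqrt β := Real.sqrt_le_sqrt hgβ.le
    have h1 : Real.sqrt β * g s ≤ β * Real.sqrt (g s) := by
      have e1 : Real.sqrt β * g s = (Real.sqrt β * Real.sqrt (g s)) * Real.sqrt (g s) := by
        linear_combination (-Real.sqrt β) * hgs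
      have e2 : β * Real.sqrt (g s) = (Real.sqrt β * Real.sqrt (g s)) * Real.sqrt β := by
        linear_combination (-Real.sqrt (g s)) * hβs
      rw [e1, e2]
      exact mul_le_mul_of_nonneg_left hle
        (mul_nonneg (Real.sqrt_nonneg _) (Real.sqrt_nonneg _))
    have h2 : (0:ℝ) ≤ (β - g s) * (β * s) :=
      mul_nonneg (by linarith) (by positivity)
    nlinarith [mul_le_mul_of_nonneg_right h1 h2]
  set M : ℝ := ∫ s in Ioi s₀, Real.sqrt (deriv g s / s) with hM
  -- key bound: F T ≤ F s₀ + M for all T > s₀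
  have key : ∀ T, s₀ < T → F T ≤ F s₀ + M := by
    intro T hT
    have hIcc : Icc s₀ T ⊆ Ioi 0 := fun x hx => lt_of_lt_of_le hs₀ hx.1
    have huIcc : uIcc s₀ T = Icc s₀ T := uIcc_of_le hT.le
    have hFint : IntervalIntegrable F' volume s₀ T := by
      apply ContinuousOn.intervalIntegrable
      rw [huIcc]; exact hcont.mono hIcc
    have ftc : ∫ s in s₀..T, F' s = F T - F s₀ :=
      intervalIntegral.integral_eq_sub_of_hasDerivAt
        (fun x hx => hFderiv x (hIcc (huIcc ▸ hx))) hFint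
    have hfint : IntervalIntegrable (fun s => Real.sqrt (deriv g s / s)) volume s₀ T := by
      rw [intervalIntegrable_iff_integrableOn_Ioc_of_le hT.le]
      exact hint.mono_set Ioc_subset_Ioi_self
    have hmono' : (∫ s in s₀..T, F' s) ≤ ∫ s in s₀..T, Real.sqrt (deriv g s / s) :=
      intervalIntegral.integral_mono_on hT.le hFint hfint
        (fun x hx => hineq x (hIcc hx))
    have h2 : (∫ s in s₀..T, Real.sqrt (deriv g s / s)) ≤ M := by
      rw [intervalIntegral.integral_of_le hT.le]
      exact setIntegral_mono_set hint (ae_of_all _ fun x => Real.sqrt_nonneg _)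
        (HasSubset.Subset.eventuallyLE Ioc_subset_Ioi_self)
    linarith [ftc ▸ hmono']
  -- F tends to atTop
  have h1 : Tendsto (fun T => β - g T) atTop (nhdsWithin 0 (Ioi 0)) := by
    apply tendsto_nhdsWithin_of_tendsto_nhds_of_eventually_within
    · simpa using hlim.const_sub β
    · filter_upwards [eventually_gt_atTop (0:ℝ)] with T hT
      exact sub_pos.mpr (hrange T hT).2
  have h2 : Tendsto (fun T => Real.log (β - g T)) atTop atBot :=
    Real.tendsto_log_nhdsGT_zero.comp h1
  have hβpos : 0 < Real.sqrt β := Real.sqrt_pos.mpr hβ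
  have hFtop : Tendsto F atTop atTop := by
    have h3 : Tendsto (fun T => -Real.log (β - g T)) atTop atTop :=
      tendsto_neg_atBot_atTop.comp h2
    have h4 := h3.const_mul_atTop hβpos
    refine h4.congr fun T => ?_
    simp only [hFdef, Function.comp]
    ring
  obtain ⟨T, hT1, hT2⟩ :=
    ((hFtop.eventually_gt_atTop (F s₀ + M)).and (eventually_gt_atTop s₀)).exists
  exact absurd (key T hT2) (not_le.mpr hT1)
end

section
/- Fix β > 0 and let g : (0,∞) → (0,β) satisfy s·g'(s) = (1/β²)·g(s)·(g(s)−β)². Define ξ(s) = −s·(log g'(s))'. Then ξ(s) = −(1/β²)·g(s)·(3g(s) − 4β), and ξ is not strictly increasing on (0,∞); in particular ξ fails the Wu–Zheng conditions (ξ(0)=0, ξ' > 0, ξ < 1) for positive bisectional curvature. -/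
open Set Filter

theorem stmt_6 (β : ℝ) (hβ : 0 < β) (g : ℝ → ℝ)
    (hsm : ContDiffOn ℝ (⊤ : ℕ∞) g (Ioi 0))
    (hmono : StrictMonoOn g (Ioi 0))
    (hderiv : ∀ s ∈ Ioi (0:ℝ), 0 < deriv g s)
    (hrange : ∀ s ∈ Ioi (0:ℝ), g s ∈ Ioo 0 β)
    (hode : ∀ s ∈ Ioi (0:ℝ), s * deriv g s = (1 / β ^ 2) * g s * (g s - β) ^ 2)
    (ξ : ℝ → ℝ)
    (hξ : ∀ s ∈ Ioi (0:ℝ), ξ s = -s * deriv (fun t => Real.log (deriv g t)) s) :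
    (∀ s ∈ Ioi (0:ℝ), ξ s = -(1 / β ^ 2) * g s * (3 * g s - 4 * β)) ∧
      ¬ StrictMonoOn ξ (Ioi 0) ∧
      ¬ (ξ 0 = 0 ∧ StrictMonoOn ξ (Ici 0) ∧ ∀ s ∈ Ici (0:ℝ), ξ s < 1) := by
  have hβ2 : (0:ℝ) < β ^ 2 := by positivity
  -- differentiability facts
  have hgdiff : DifferentiableOn ℝ g (Ioi 0) := hsm.differentiableOn (by simp)
  have hg'cd : ContDiffOn ℝ (⊤ : ℕ∞) (deriv g) (Ioi 0) := by
    exact hsm.deriv_of_isOpen isOpen_Ioi (by exact (by simp))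
  have hg'diff : DifferentiableOn ℝ (deriv g) (Ioi 0) := hg'cd.differentiableOn (by simp)
  have hgAt : ∀ s ∈ Ioi (0:ℝ), HasDerivAt g (deriv g s) s := by
    intro s hs
    exact ((hgdiff.differentiableAt (isOpen_Ioi.mem_nhds hs)).hasDerivAt)
  have hg'At : ∀ s ∈ Ioi (0:ℝ), HasDerivAt (deriv g) (deriv (deriv g) s) s := by
    intro s hs
    exact ((hg'diff.differentiableAt (isOpen_Ioi.mem_nhds hs)).hasDerivAt)
  -- Part 1: the formula for ξ
  have part1 : ∀ s ∈ Ioi (0:ℝ), ξ s = -(1 / β ^ 2) * g s * (3 * g s - 4 * β) := by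
    intro s hs
    have hs0 : (0:ℝ) < s := hs
    set G := deriv g s with hGdef
    set G2 := deriv (deriv g) s with hG2def
    set x := g s with hxdef
    have hGpos : 0 < G := hderiv s hs
    -- differentiate the ODE
    have h1 : HasDerivAt (fun t => t * deriv g t) (1 * G + s * G2) s :=
      (hasDerivAt_id s).mul (hg'At s hs)
    have hgβ : HasDerivAt (fun t => g t - β) G s := (hgAt s hs).sub_const β
    have h2 : HasDerivAt (fun t => (1 / β ^ 2) * g t * (g t - β) ^ 2) _ s := ((hasDerivAt_const s ((1:ℝ) / β ^ 2)).mul (hgAt s hs)).mul (hgβ.pow 2)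
    have heq : deriv (fun t => t * deriv g t) s
        = deriv (fun t => (1 / β ^ 2) * g t * (g t - β) ^ 2) s := by
      apply Filter.EventuallyEq.deriv_eq
      filter_upwards [isOpen_Ioi.mem_nhds hs] with t ht using hode t ht
    have hkey := h2.deriv
    rw [← heq, h1.deriv] at hkey
    norm_num at hkey
    -- derivative of log (deriv g)
    have hlog : deriv (fun t => Real.log (deriv g t)) s = G2 / G :=
      ((hg'At s hs).log (ne_of_gt hGpos)).deriv
    have hξs := hξ s hs
    rw [hlog] at hξs
    -- from hkey : s * G2 = ((…) - 1) * G
    have hsG2 : s * G2 = ((1 / β ^ 2) * ((x - β) ^ 2 + 2 * x * (x - β)) - 1) * G := by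
      linear_combination hkey
    rw [hξs]
    have : -s * (G2 / G) = -(s * G2) / G := by ring
    rw [this, hsG2]
    field_simp
    ring
  -- Claim A : g eventually exceeds any c < β
  have claimA : ∀ c : ℝ, c < β → ∃ s : ℝ, 0 < s ∧ c < g s := by
    intro c hc
    by_contra hcon
    push_neg at hcon
    have hcon' : ∀ s : ℝ, 0 < s → g s ≤ c := fun s hs => hcon s hs
    have ha : 0 < g 1 := (hrange 1 (by norm_num)).1
    set a := g 1 with hadef
    set K := (1 / β ^ 2) * a * (β - c) ^ 2 with hKdef
    have hcβ : 0 < β - c := by linarith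
    have hK : 0 < K := by positivity
    -- ψ = g - K log is monotone on Ici 1
    have hmonoψ : MonotoneOn (fun t => g t - K * Real.log t) (Ici 1) := by
      apply monotoneOn_of_deriv_nonneg (convex_Ici 1)
      · apply ContinuousOn.sub
        · exact (hgdiff.continuousOn).mono (fun t ht => show (0:ℝ) < t from lt_of_lt_of_le one_pos ht)
        · exact (continuousOn_const.mul (Real.continuousOn_log.mono
            (fun t ht => ne_of_gt (lt_of_lt_of_le one_pos ht))))
      · intro t ht
        rw [interior_Ici] at ht
        have ht0 : (0:ℝ) < t := lt_trans one_pos ht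
        exact ((hgdiff.differentiableAt (isOpen_Ioi.mem_nhds ht0)).sub
          ((differentiable_const K).differentiableAt.mul
            (Real.differentiableAt_log (ne_of_gt ht0)))).differentiableWithinAt
      · intro t ht
        rw [interior_Ici] at ht
        have ht0 : (0:ℝ) < t := lt_trans one_pos ht
        have hgd := (hgdiff.differentiableAt (isOpen_Ioi.mem_nhds ht0))
        have hld : DifferentiableAt ℝ (fun t => K * Real.log t) t :=
          (differentiable_const K).differentiableAt.mul
            (Real.differentiableAt_log (ne_of_gt ht0))
        rw [deriv_fun_sub hgd hld, deriv_const_mul K (Real.differentiableAt_log (ne_of_gt ht0)),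
          Real.deriv_log]
        -- deriv g t = (1/β²) g (g-β)² / t ≥ K / t
        have hodet := hode t ht0
        have hgt : g t ∈ Ioo 0 β := hrange t ht0
        have hga : a ≤ g t := hmono.monotoneOn (by norm_num) ht0 (le_of_lt ht)
        have hgc : g t ≤ c := hcon' t ht0
        have hsq : (β - c) ^ 2 ≤ (g t - β) ^ 2 := by nlinarith
        have hnum : K ≤ (1 / β ^ 2) * g t * (g t - β) ^ 2 := by
          rw [hKdef]
          have h1 : (1 / β ^ 2) * a * (β - c) ^ 2 ≤ (1 / β ^ 2) * g t * (β - c) ^ 2 := by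
            have := div_pos one_pos hβ2
            nlinarith
          have h2 : (1 / β ^ 2) * g t * (β - c) ^ 2 ≤ (1 / β ^ 2) * g t * (g t - β) ^ 2 := by
            have hgpos := hgt.1
            exact mul_le_mul_of_nonneg_left hsq (by positivity)
          linarith
        have hderivgt : deriv g t = (1 / β ^ 2) * g t * (g t - β) ^ 2 / t := by
          field_simp at hodet ⊢
          linarith [hodet]
        rw [hderivgt]
        have hfin : K / t ≤ 1 / β ^ 2 * g t * (g t - β) ^ 2 / t := by gcongr
        have hKt : 0 < K / t := div_pos hK ht0
        rw [div_eq_mul_inv K t] at hfin hKt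
        linarith
    -- apply at s = exp(β/K)
    set S := Real.exp (β / K) with hSdef
    have hS1 : 1 ≤ S := by
      rw [hSdef]
      have : (0:ℝ) ≤ β / K := le_of_lt (div_pos hβ hK)
      calc (1:ℝ) = Real.exp 0 := by simp
        _ ≤ Real.exp (β / K) := Real.exp_le_exp.mpr this
    have happ := hmonoψ (self_mem_Ici) (mem_Ici.mpr hS1) hS1
    simp only [Real.log_one, hSdef, Real.log_exp] at happ
    -- g S ≥ a + β > β, contradiction
    have hKd : K * (β / K) = β := by field_simp
    have hgS : g S < β := (hrange S (lt_of_lt_of_le one_pos hS1)).2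
    rw [hKd] at happ
    simp at happ
    linarith
  -- Part 2: ξ is not strictly monotone on Ioi 0
  have part2 : ¬ StrictMonoOn ξ (Ioi 0) := by
    intro hsm2
    obtain ⟨s₀, hs₀, hgs₀⟩ := claimA (2 * β / 3) (by linarith)
    have hs₁ : (0:ℝ) < s₀ + 1 := by linarith
    have hs₂ : (0:ℝ) < s₀ + 2 := by linarith
    have hy : 2 * β / 3 < g (s₀ + 1) :=
      lt_trans hgs₀ (hmono hs₀ hs₁ (by linarith))
    have hxy : g (s₀ + 1) < g (s₀ + 2) := hmono hs₁ hs₂ (by linarith)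
    have hxβ : g (s₀ + 2) < β := (hrange _ hs₂).2
    have hξ1 := part1 (s₀ + 1) hs₁
    have hξ2 := part1 (s₀ + 2) hs₂
    have hlt := hsm2 (mem_Ioi.mpr hs₁) (mem_Ioi.mpr hs₂) (by linarith)
    rw [hξ1, hξ2] at hlt
    set y := g (s₀ + 1)
    set x := g (s₀ + 2)
    -- h(x) < h(y) since x > y > 2β/3
    have : -(1 / β ^ 2) * x * (3 * x - 4 * β) < -(1 / β ^ 2) * y * (3 * y - 4 * β) := by
      have hb := div_pos one_pos hβ2
      nlinarith [mul_pos (mul_pos hb (sub_pos.mpr hxy))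
        (show (0:ℝ) < 3 * (x + y) - 4 * β by linarith)]
    linarith
  refine ⟨part1, part2, ?_⟩
  rintro ⟨_, hmono2, _⟩
  exact part2 (hmono2.mono (Ioi_subset_Ici le_rfl))
end

section
/- Let n ≥ 2 and suppose g : (0,∞) → ℝ is smooth with g > 0, g' > 0, lim_{s→0⁺} g(s) = 0, and s·g'(s) = c₄·g(s)³ + c₃·g(s)² + g(s) for constants c₃, c₄, and let the scalar curvature be R(s) = −(n+2)(n+1)·c₄·g(s) − (n+1)·n·c₃. Then there is no such solution with R(s) < 0 for all s. -/
open Set Filter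

lemma log_grow (f : ℝ → ℝ) (K : ℝ)
    (hf : ∀ s ∈ Set.Ici (1:ℝ), DifferentiableAt ℝ f s)
    (hd : ∀ s ∈ Set.Ici (1:ℝ), K / s ≤ deriv f s) :
    ∀ s ∈ Set.Ici (1:ℝ), f 1 + K * Real.log s ≤ f s := by
  set φ : ℝ → ℝ := fun s => f s - K * Real.log s with hφ
  have hmono : MonotoneOn φ (Set.Ici 1) := by
    apply monotoneOn_of_deriv_nonneg (convex_Ici 1)
    · refine ContinuousOn.sub (fun s hs => (hf s hs).continuousAt.continuousWithinAt) ?_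
      refine continuousOn_const.mul (Real.continuousOn_log.mono ?_)
      intro s hs
      simp only [mem_compl_iff, mem_singleton_iff]
      exact ne_of_gt (lt_of_lt_of_le one_pos hs)
    · intro x hx
      rw [interior_Ici] at hx
      exact ((hf x (Set.mem_Ici.mpr hx.le)).sub (((Real.differentiableAt_log
        (ne_of_gt (lt_trans one_pos hx)))).const_mul K)).differentiableWithinAt
    · intro x hx
      rw [interior_Ici] at hx
      have hx0 : (0:ℝ) < x := lt_trans one_pos hx
      have h1 : HasDerivAt φ (deriv f x - K * x⁻¹) x :=
        ((hf x (Set.mem_Ici.mpr hx.le)).hasDerivAt).sub ((Real.hasDerivAt_log hx0.ne').const_mul K)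
      rw [h1.deriv]
      have h2 := hd x (Set.mem_Ici.mpr hx.le)
      rw [div_eq_mul_inv] at h2
      linarith
  intro s hs
  have h := hmono self_mem_Ici hs hs
  simp only [hφ, Real.log_one, mul_zero, sub_zero] at h
  linarith

lemma no_superlinear (g : ℝ → ℝ) (K₀ : ℝ) (hK : 0 < K₀)
    (hdiff : ∀ s ∈ Ioi (0:ℝ), DifferentiableAt ℝ g s)
    (hpos : ∀ s ∈ Ioi (0:ℝ), 0 < g s)
    (hineq : ∀ s ∈ Ioi (0:ℝ), K₀ * g s ^ 2 ≤ s * deriv g s) : False := by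
  set f : ℝ → ℝ := fun s => -(g s)⁻¹ with hf
  have hmem : ∀ s ∈ Ici (1:ℝ), s ∈ Ioi (0:ℝ) := fun s hs => Set.mem_Ioi.mpr (lt_of_lt_of_le one_pos hs)
  have hder : ∀ s ∈ Ici (1:ℝ), HasDerivAt f (deriv g s / g s ^ 2) s := by
    intro s hs
    have h1 : HasDerivAt g (deriv g s) s := (hdiff s (hmem s hs)).hasDerivAt
    have h2 := (h1.inv (ne_of_gt (hpos s (hmem s hs)))).neg
    rw [show -(-deriv g s / g s ^ 2) = deriv g s / g s ^ 2 by ring] at h2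
    exact h2
  have hfd : ∀ s ∈ Ici (1:ℝ), DifferentiableAt ℝ f s := fun s hs => (hder s hs).differentiableAt
  have hd : ∀ s ∈ Ici (1:ℝ), K₀ / s ≤ deriv f s := by
    intro s hs
    rw [(hder s hs).deriv]
    have hs0 : (0:ℝ) < s := hmem s hs
    have hg : 0 < g s := hpos s (hmem s hs)
    rw [div_le_div_iff₀ hs0 (by positivity)]
    nlinarith [hineq s (hmem s hs)]
  have hg1 : 0 < g 1 := hpos 1 (by norm_num)
  have hgrow := log_grow f K₀ hfd hd
  set s₀ : ℝ := Real.exp ((1 + (g 1)⁻¹) / K₀) with hs₀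
  have hs₀1 : (1:ℝ) ≤ s₀ := by
    rw [hs₀]
    have h0 : (0:ℝ) ≤ (1 + (g 1)⁻¹) / K₀ := by positivity
    calc (1:ℝ) = Real.exp 0 := Real.exp_zero.symm
      _ ≤ _ := Real.exp_le_exp.mpr h0
  have h := hgrow s₀ hs₀1
  rw [Real.log_exp] at h
  have hK' : K₀ * ((1 + (g 1)⁻¹) / K₀) = 1 + (g 1)⁻¹ := by
    field_simp
  have hfs : 0 < (g s₀)⁻¹ := by
    have := hpos s₀ (hmem s₀ hs₀1); positivity
  simp only [hf] at h
  rw [hK'] at h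
  have hfi : 0 < (g 1)⁻¹ := by positivity
  linarith

theorem stmt_7 (n : ℕ) (hn : 2 ≤ n) (g : ℝ → ℝ) (c₃ c₄ : ℝ)
    (hsm : ContDiffOn ℝ (⊤ : ℕ∞) g (Ioi 0))
    (hpos : ∀ s ∈ Ioi (0:ℝ), 0 < g s)
    (hderiv : ∀ s ∈ Ioi (0:ℝ), 0 < deriv g s)
    (hlim : Tendsto g (nhdsWithin 0 (Ioi 0)) (nhds 0))
    (hode : ∀ s ∈ Ioi (0:ℝ),
      s * deriv g s = c₄ * g s ^ 3 + c₃ * g s ^ 2 + g s)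
    (R : ℝ → ℝ)
    (hR : ∀ s ∈ Ioi (0:ℝ),
      R s = -((n:ℝ) + 2) * ((n:ℝ) + 1) * c₄ * g s - ((n:ℝ) + 1) * (n:ℝ) * c₃) :
    ¬ (∀ s ∈ Ioi (0:ℝ), R s < 0) := by
  intro hneg
  have hn2 : (2:ℝ) ≤ (n:ℝ) := by exact_mod_cast hn
  have h1m : (1:ℝ) ∈ Ioi (0:ℝ) := by norm_num
  have hg1 : 0 < g 1 := hpos 1 h1m
  have hdiff : ∀ s ∈ Ioi (0:ℝ), DifferentiableAt ℝ g s := fun s hs =>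
    ((hsm.differentiableOn (by simp)).differentiableAt (isOpen_Ioi.mem_nhds hs))
  -- c₃ ≥ 0
  have hc₃ : 0 ≤ c₃ := by
    have hlR : Tendsto R (nhdsWithin 0 (Ioi 0)) (nhds (-(((n:ℝ) + 1) * (n:ℝ) * c₃))) := by
      have h0 : Tendsto (fun s => -((n:ℝ) + 2) * ((n:ℝ) + 1) * c₄ * g s - ((n:ℝ) + 1) * (n:ℝ) * c₃)
          (nhdsWithin 0 (Ioi 0)) (nhds (-((n:ℝ) + 2) * ((n:ℝ) + 1) * c₄ * 0 - ((n:ℝ) + 1) * (n:ℝ) * c₃)) :=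
        (hlim.const_mul _).sub_const _
      rw [mul_zero, zero_sub] at h0
      exact h0.congr' (eventually_nhdsWithin_of_forall (fun s hs => (hR s hs).symm))
    have hle : -(((n:ℝ) + 1) * (n:ℝ) * c₃) ≤ 0 :=
      le_of_tendsto hlR (eventually_nhdsWithin_of_forall (fun s hs => (hneg s hs).le))
    by_contra hcon
    push_neg at hcon
    have : ((n:ℝ) + 1) * (n:ℝ) * c₃ < 0 :=
      mul_neg_of_pos_of_neg (by nlinarith) hcon
    linarith
  -- strict monotonicity of g on Ioi 0
  have hmono : StrictMonoOn g (Ioi (0:ℝ)) := by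
    apply strictMonoOn_of_deriv_pos (convex_Ioi 0) (hsm.continuousOn)
    intro x hx
    rw [interior_Ioi] at hx
    exact hderiv x hx
  rcases lt_trichotomy c₄ 0 with hc4 | hc4 | hc4
  · -- c₄ < 0 : bounded case
    set A : ℝ := ((n:ℝ) + 2) * ((n:ℝ) + 1) * (-c₄) with hA
    set C : ℝ := ((n:ℝ) + 1) * (n:ℝ) * c₃ with hC
    have hnc4 : (0:ℝ) < -c₄ := neg_pos.mpr hc4
    have hApos : 0 < A := by
      rw [hA]; positivity
    have hgB : ∀ s ∈ Ioi (0:ℝ), A * g s < C := by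
      intro s hs
      have h := hneg s hs
      rw [hR s hs] at h
      have he : A * g s = -((n:ℝ) + 2) * ((n:ℝ) + 1) * c₄ * g s := by rw [hA]; ring
      rw [he]; linarith
    have hCpos : 0 < C := lt_trans (mul_pos hApos hg1) (hgB 1 h1m)
    have hc₃pos : 0 < c₃ := by
      by_contra hcon
      push_neg at hcon
      have : C ≤ 0 := by
        rw [hC]
        exact mul_nonpos_of_nonneg_of_nonpos (by positivity) hcon
      linarith
    set B : ℝ := C / A with hB
    have hgB' : ∀ s ∈ Ioi (0:ℝ), g s < B := by
      intro s hs
      rw [hB, lt_div_iff₀ hApos]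
      linarith [hgB s hs]
    have hBg1 : g 1 < B := hgB' 1 h1m
    have hq : ∀ s ∈ Ioi (0:ℝ), 0 < c₄ * g s ^ 2 + c₃ * g s + 1 := by
      intro s hs
      have h1 : 0 < s * deriv g s := mul_pos hs (hderiv s hs)
      rw [hode s hs] at h1
      have hg := hpos s hs
      by_contra hcon
      push_neg at hcon
      nlinarith [mul_nonpos_of_nonneg_of_nonpos hg.le hcon]
    -- q positive at B
    have hAB : A * B = C := by
      rw [hB]; field_simp
    have he : ((n:ℝ) + 2) * (-c₄) * B = (n:ℝ) * c₃ := by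
      have h1 : ((n:ℝ) + 1) * (((n:ℝ) + 2) * (-c₄) * B - (n:ℝ) * c₃) = 0 := by
        rw [hA, hC] at hAB
        linarith [hAB]
      have h2 : ((n:ℝ) + 1) ≠ 0 := by positivity
      have := mul_eq_zero.mp h1
      rcases this with h | h
      · exact absurd h h2
      · linarith
    have hqB : 0 < c₄ * B ^ 2 + c₃ * B + 1 := by
      have key : ((n:ℝ) + 2) ^ 2 * (-c₄) * (c₄ * B ^ 2 + c₃ * B + 1)
          = 2 * (n:ℝ) * c₃ ^ 2 + ((n:ℝ) + 2) ^ 2 * (-c₄) := by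
        linear_combination (- (((n:ℝ) + 2) * (-c₄) * B + (n:ℝ) * c₃) + ((n:ℝ) + 2) * c₃) * he
      have h2 : 0 < ((n:ℝ) + 2) ^ 2 * (-c₄) := by positivity
      have h3 : 0 < 2 * (n:ℝ) * c₃ ^ 2 + ((n:ℝ) + 2) ^ 2 * (-c₄) := by positivity
      nlinarith [key, h2, h3]
    set δ : ℝ := min 1 (c₄ * B ^ 2 + c₃ * B + 1) with hδ
    have hδpos : 0 < δ := lt_min one_pos hqB
    have hqδ : ∀ s ∈ Ioi (0:ℝ), δ ≤ c₄ * g s ^ 2 + c₃ * g s + 1 := by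
      intro s hs
      have hg := hpos s hs
      have hgb := hgB' s hs
      have hδ1 : δ ≤ 1 := min_le_left _ _
      have hδq : δ ≤ c₄ * B ^ 2 + c₃ * B + 1 := min_le_right _ _
      have hBpos : 0 < B := hg.trans hgb
      nlinarith [mul_nonneg (mul_nonneg (mul_nonneg hnc4.le hBpos.le) hg.le) (sub_nonneg.mpr hgb.le),
        mul_le_mul_of_nonneg_left hδq hg.le,
        mul_le_mul_of_nonneg_left hδ1 (sub_nonneg.mpr hgb.le)]
    set K : ℝ := g 1 * δ with hKdef
    have hKpos : 0 < K := mul_pos hg1 hδpos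
    have hd : ∀ s ∈ Ici (1:ℝ), K / s ≤ deriv g s := by
      intro s hs
      have hs0 : (0:ℝ) < s := lt_of_lt_of_le one_pos hs
      have hsI : s ∈ Ioi (0:ℝ) := hs0
      have hg1s : g 1 ≤ g s := by
        rcases eq_or_lt_of_le (Set.mem_Ici.mp hs) with h | h
        · rw [← h]
        · exact le_of_lt (hmono h1m hsI h)
      have h1 : K ≤ s * deriv g s := by
        rw [hode s hsI]
        have hqs := hqδ s hsI
        have hg := hpos s hsI
        nlinarith [mul_le_mul_of_nonneg_left hqs hg.le,
          mul_le_mul_of_nonneg_right hg1s hδpos.le]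
      rw [div_le_iff₀ hs0]
      linarith
    have hgrow := log_grow g K (fun s hs => hdiff s (Set.mem_Ioi.mpr (lt_of_lt_of_le one_pos hs))) hd
    set s₀ : ℝ := Real.exp ((B - g 1 + 1) / K) with hs₀
    have hs₀1 : (1:ℝ) ≤ s₀ := by
      rw [hs₀]
      have h0 : (0:ℝ) ≤ (B - g 1 + 1) / K := by
        apply div_nonneg _ hKpos.le
        linarith
      calc (1:ℝ) = Real.exp 0 := Real.exp_zero.symm
        _ ≤ _ := Real.exp_le_exp.mpr h0
    have h := hgrow s₀ hs₀1
    rw [Real.log_exp] at h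
    have hK' : K * ((B - g 1 + 1) / K) = B - g 1 + 1 := by
      field_simp
    rw [hK'] at h
    have := hgB' s₀ (lt_of_lt_of_le one_pos hs₀1)
    linarith
  · -- c₄ = 0
    rcases eq_or_lt_of_le hc₃ with h30 | h3pos
    · have h := hneg 1 h1m
      rw [hR 1 h1m, ← h30, hc4] at h
      norm_num at h
    · apply no_superlinear g c₃ h3pos hdiff hpos
      intro s hs
      rw [hode s hs, hc4]
      have hg := hpos s hs
      nlinarith
  · -- c₄ > 0
    set r : ℝ := Real.sqrt c₄ with hr
    have hr2 : r ^ 2 = c₄ := Real.sq_sqrt hc4.le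
    have hrpos : 0 < r := Real.sqrt_pos.mpr hc4
    apply no_superlinear g (2 * r) (by positivity) hdiff hpos
    intro s hs
    rw [hode s hs, ← hr2]
    have hg := hpos s hs
    nlinarith [mul_nonneg hg.le (sq_nonneg (r * g s - 1)), mul_nonneg hc₃ (sq_nonneg (g s))]
end

section
/- Let n ≥ 2 and let u ∈ C^∞(0,∞) satisfy u'(s) > 0 and u'(s) + s·u''(s) > 0 for all s > 0, and set g(s) = s·u'(s). Suppose g satisfies s·g'(s) = F(g(s)) where F(g) = (c₄g^{n+2} + c₃g^{n+1} + gⁿ + c₁g + c₀)/g^{n−1}. Then F(0) = 0 (interpreted as c₀ = c₁ = 0) if and only if lim_{s→0⁺} g(s) = 0. -/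
open Set Filter

lemma aux_div0 (φ d : ℝ → ℝ) (c s₁ B : ℝ) (hc : 0 < c) (hs₁ : 0 < s₁)
    (hd : ∀ s ∈ Ioo (0:ℝ) s₁, HasDerivAt φ (d s) s)
    (hge : ∀ s ∈ Ioo (0:ℝ) s₁, c / s ≤ d s)
    (hB : ∀ s ∈ Ioo (0:ℝ) s₁, B ≤ φ s) : False := by
  set ψ : ℝ → ℝ := fun s => φ s - c * Real.log s with hψdef
  have hψd : ∀ s ∈ Ioo (0:ℝ) s₁, HasDerivAt ψ (d s - c * s⁻¹) s := fun s hs =>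
    (hd s hs).sub ((Real.hasDerivAt_log (ne_of_gt hs.1)).const_mul c)
  have hmono : MonotoneOn ψ (Ioo 0 s₁) := by
    apply monotoneOn_of_deriv_nonneg (convex_Ioo 0 s₁)
      (fun s hs => (hψd s hs).continuousAt.continuousWithinAt)
      (fun s hs => ((hψd s (by rwa [interior_Ioo] at hs)).differentiableAt).differentiableWithinAt)
    intro s hs
    rw [interior_Ioo] at hs
    rw [(hψd s hs).deriv]
    have h1 : c / s ≤ d s := hge s hs
    rw [div_eq_mul_inv] at h1
    linarith
  set t := s₁ / 2 with htdef
  have ht : t ∈ Ioo (0:ℝ) s₁ := ⟨by positivity, by rw [htdef]; linarith⟩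
  set a := min (t/2) (Real.exp ((B - ψ t)/c - 1)) with hadef
  have ha0 : 0 < a := lt_min (by linarith [ht.1]) (Real.exp_pos _)
  have hat : a ≤ t := le_trans (min_le_left _ _) (by linarith [ht.1])
  have ha : a ∈ Ioo (0:ℝ) s₁ := ⟨ha0, lt_of_le_of_lt hat ht.2⟩
  have hle : ψ a ≤ ψ t := hmono ha ht hat
  have hloga : Real.log a ≤ (B - ψ t)/c - 1 := by
    calc Real.log a ≤ Real.log (Real.exp ((B - ψ t)/c - 1)) :=
          Real.log_le_log ha0 (min_le_right _ _)
      _ = (B - ψ t)/c - 1 := Real.log_exp _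
  have hBa : B ≤ φ a := hB a ha
  have : B - c * Real.log a ≤ ψ t := by
    calc B - c * Real.log a ≤ φ a - c * Real.log a := by linarith
      _ = ψ a := rfl
      _ ≤ ψ t := hle
  have h2 : (B - ψ t) / c ≤ Real.log a := by
    rw [div_le_iff₀ hc]; nlinarith
  linarith

lemma aux_divtop (φ d : ℝ → ℝ) (c s₀ B : ℝ) (hc : 0 < c) (hs₀ : 0 < s₀)
    (hd : ∀ s ∈ Ioi s₀, HasDerivAt φ (d s) s)
    (hge : ∀ s ∈ Ioi s₀, c / s ≤ d s)
    (hB : ∀ s ∈ Ioi s₀, φ s ≤ B) : False := by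
  set ψ : ℝ → ℝ := fun s => φ s - c * Real.log s with hψdef
  have hψd : ∀ s ∈ Ioi s₀, HasDerivAt ψ (d s - c * s⁻¹) s := fun s hs =>
    (hd s hs).sub ((Real.hasDerivAt_log (ne_of_gt (lt_trans hs₀ hs))).const_mul c)
  have hmono : MonotoneOn ψ (Ioi s₀) := by
    apply monotoneOn_of_deriv_nonneg (convex_Ioi s₀)
      (fun s hs => (hψd s hs).continuousAt.continuousWithinAt)
      (fun s hs => ((hψd s (by rwa [interior_Ioi] at hs)).differentiableAt).differentiableWithinAt)
    intro s hs
    rw [interior_Ioi] at hs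
    rw [(hψd s hs).deriv]
    have h1 : c / s ≤ d s := hge s hs
    rw [div_eq_mul_inv] at h1
    linarith
  set t := s₀ + 1 with htdef
  have ht : t ∈ Ioi s₀ := by simp [htdef]
  set K := (B - ψ t)/c with hKdef
  set S := max (t+1) (Real.exp (K+1)) with hSdef
  have hS : S ∈ Ioi s₀ := lt_of_lt_of_le (show s₀ < t + 1 by linarith [htdef]) (le_max_left _ _)
  have htS : t ≤ S := le_trans (by linarith) (le_max_left _ _)
  have hle : ψ t ≤ ψ S := hmono ht hS htS
  have hlogS : K + 1 ≤ Real.log S := by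
    calc K + 1 = Real.log (Real.exp (K+1)) := (Real.log_exp _).symm
      _ ≤ Real.log S := Real.log_le_log (Real.exp_pos _) (le_max_right _ _)
  have hBS : φ S ≤ B := hB S hS
  have : ψ t ≤ B - c * Real.log S := by
    calc ψ t ≤ ψ S := hle
      _ = φ S - c * Real.log S := rfl
      _ ≤ B - c * Real.log S := by linarith
  have h2 : Real.log S ≤ K := by
    rw [hKdef, le_div_iff₀ hc]; nlinarith
  linarith


set_option maxHeartbeats 1000000 in
theorem stmt_10 (n : ℕ) (hn : 2 ≤ n) (u : ℝ → ℝ) (c₀ c₁ c₃ c₄ : ℝ)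
    (hsm : ContDiffOn ℝ (⊤ : ℕ∞) u (Ioi 0))
    (hpos : ∀ s ∈ Ioi (0:ℝ), 0 < deriv u s)
    (hpos' : ∀ s ∈ Ioi (0:ℝ), 0 < deriv u s + s * deriv (deriv u) s)
    (g : ℝ → ℝ) (hg : ∀ s, g s = s * deriv u s)
    (F : ℝ → ℝ)
    (hF : ∀ x : ℝ, x ≠ 0 →
      F x = (c₄ * x ^ (n + 2) + c₃ * x ^ (n + 1) + x ^ n + c₁ * x + c₀) / x ^ (n - 1))
    (hode : ∀ s ∈ Ioi (0:ℝ), s * deriv g s = F (g s)) :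
    (c₀ = 0 ∧ c₁ = 0) ↔ Tendsto g (nhdsWithin 0 (Ioi 0)) (nhds 0) := by
  obtain ⟨m, rfl⟩ : ∃ m, n = m + 2 := ⟨n - 2, by omega⟩
  clear hn
  have e1 : m + 2 + 2 = m + 4 := by omega
  have e2 : m + 2 + 1 = m + 3 := by omega
  have e3 : m + 2 - 1 = m + 1 := by omega
  simp only [e1, e2, e3] at hF
  have hdu : ∀ s ∈ Ioi (0:ℝ), DifferentiableAt ℝ (deriv u) s := by
    intro s hs
    have h2 : ContDiffOn ℝ (⊤ : ℕ∞) (deriv u) (Ioi 0) := hsm.deriv_of_isOpen isOpen_Ioi (by simp)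
    exact (h2.differentiableOn (by simp)).differentiableAt (isOpen_Ioi.mem_nhds hs)
  obtain ⟨D, hDdef⟩ : ∃ D : ℝ → ℝ, D = fun s => deriv u s + s * deriv (deriv u) s := ⟨_, rfl⟩
  have hgfun : g = fun s => s * deriv u s := funext hg
  have hD : ∀ s ∈ Ioi (0:ℝ), HasDerivAt g (D s) s := by
    intro s hs
    have h := (hasDerivAt_id s).mul ((hdu s hs).hasDerivAt)
    rw [hgfun]
    rw [hDdef]
    show HasDerivAt (id * deriv u) _ s
    simpa [one_mul] using h
  have hDpos : ∀ s ∈ Ioi (0:ℝ), 0 < D s := by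
    intro s hs; rw [hDdef]; exact hpos' s hs
  have hgpos : ∀ s ∈ Ioi (0:ℝ), 0 < g s := fun s hs => by
    rw [hg s]; exact mul_pos hs (hpos s hs)
  have hsmono : StrictMonoOn g (Ioi 0) :=
    strictMonoOn_of_deriv_pos (convex_Ioi 0)
      (fun s hs => (hD s hs).continuousAt.continuousWithinAt)
      (fun s hs => by rw [interior_Ioi] at hs; rw [(hD s hs).deriv]; exact hDpos s hs)
  have hFg : ∀ s ∈ Ioi (0:ℝ), s * D s = F (g s) := fun s hs => by
    rw [← (hD s hs).deriv]; exact hode s hs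
  have hFgpos : ∀ s ∈ Ioi (0:ℝ), 0 < F (g s) := fun s hs =>
    (hFg s hs) ▸ mul_pos hs (hDpos s hs)
  have hbdd : BddBelow (g '' Ioi 0) := ⟨0, fun y hy => by
    obtain ⟨s, hs, rfl⟩ := hy; exact (hgpos s hs).le⟩
  have hne : (g '' Ioi 0).Nonempty := ⟨g 1, 1, by norm_num, rfl⟩
  obtain ⟨L, hLdef⟩ : ∃ L : ℝ, L = sInf (g '' Ioi 0) := ⟨_, rfl⟩
  have hLle : ∀ s ∈ Ioi (0:ℝ), L ≤ g s := fun s hs => hLdef ▸ csInf_le hbdd ⟨s, hs, rfl⟩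
  have hL0 : 0 ≤ L := hLdef ▸ le_csInf hne (fun y hy => by
    obtain ⟨s, hs, rfl⟩ := hy; exact (hgpos s hs).le)
  have hsmall : ∀ b, L < b → ∃ s ∈ Ioi (0:ℝ), g s < b := by
    intro b hb
    rw [hLdef] at hb
    obtain ⟨y, hy, hyb⟩ := exists_lt_of_csInf_lt hne hb
    obtain ⟨s, hs, rfl⟩ := hy
    exact ⟨s, hs, hyb⟩
  have hgL : ∀ s ∈ Ioi (0:ℝ), L < g s := fun s hs =>
    lt_of_le_of_lt (hLle (s/2) (by simp at hs ⊢; linarith)) (hsmono (by simp at hs ⊢; linarith) hs (by simp at hs; linarith))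
  have htendL : Tendsto g (nhdsWithin 0 (Ioi 0)) (nhds L) := by
    rw [tendsto_order]
    constructor
    · intro b hb
      filter_upwards [self_mem_nhdsWithin] with s hs
      exact lt_of_lt_of_le hb (hLle s hs)
    · intro b hb
      obtain ⟨y, hy, hyb⟩ := hsmall b hb
      have hmem : Ioo (0:ℝ) y ∈ nhdsWithin (0:ℝ) (Ioi 0) :=
        Ioo_mem_nhdsGT_of_mem ⟨le_refl 0, hy⟩
      filter_upwards [hmem] with s hs
      exact lt_trans (hsmono hs.1 hy hs.2) hyb
  constructor
  · rintro ⟨rfl, rfl⟩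
    suffices hLz : L = 0 by rwa [hLz] at htendL
    by_contra hLne
    have hL : 0 < L := lt_of_le_of_ne hL0 (Ne.symm hLne)
    have hFP : ∀ x : ℝ, x ≠ 0 → F x = c₄*x^3+c₃*x^2+x := by
      intro x hx
      rw [hF x hx]
      have hnum : c₄ * x ^ (m+4) + c₃ * x ^ (m+3) + x ^ (m+2) + 0 * x + 0
          = x^(m+1) * (c₄*x^3+c₃*x^2+x) := by ring
      rw [hnum, mul_div_cancel_left₀ _ (pow_ne_zero _ hx)]
    have hPg : ∀ s ∈ Ioi (0:ℝ), 0 < c₄*(g s)^3+c₃*(g s)^2+(g s) := fun s hs => by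
      have h := hFgpos s hs
      rwa [hFP _ (ne_of_gt (hgpos s hs))] at h
    have hPcont : Tendsto (fun s => c₄*(g s)^3+c₃*(g s)^2+(g s))
        (nhdsWithin 0 (Ioi 0)) (nhds (c₄*L^3+c₃*L^2+L)) := by
      have hc : Continuous (fun x : ℝ => c₄*x^3+c₃*x^2+x) := by continuity
      exact (hc.tendsto L).comp htendL
    have hPL : 0 ≤ c₄*L^3+c₃*L^2+L := by
      apply ge_of_tendsto hPcont
      filter_upwards [self_mem_nhdsWithin] with s hs
      exact (hPg s hs).le
    rcases hPL.lt_or_eq with hPLpos | hPL0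
    · -- the limit value of F is positive: contradiction with g bounded below
      have hev : ∀ᶠ s in nhdsWithin (0:ℝ) (Ioi 0),
          (c₄*L^3+c₃*L^2+L) / 2 < c₄*(g s)^3+c₃*(g s)^2+(g s) :=
        hPcont.eventually (eventually_gt_nhds (half_lt_self hPLpos))
      rw [eventually_iff, mem_nhdsGT_iff_exists_Ioo_subset] at hev
      obtain ⟨s₁, hs₁, hsub⟩ := hev
      refine aux_div0 g D ((c₄*L^3+c₃*L^2+L) / 2) s₁ 0 (by linarith) hs₁
        (fun s hs => hD s hs.1) ?_ (fun s hs => (hgpos s hs.1).le)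
      intro s hs
      have h1 : (c₄*L^3+c₃*L^2+L) / 2 < c₄*(g s)^3+c₃*(g s)^2+(g s) := hsub hs
      have h2 : s * D s = c₄*(g s)^3+c₃*(g s)^2+(g s) := by
        rw [hFg s hs.1, hFP _ (ne_of_gt (hgpos s hs.1))]
      rw [div_le_iff₀ hs.1]
      nlinarith [h1, h2]
    · -- the limit value of F is zero: factor the cubic
      have hLne : L ≠ 0 := ne_of_gt hL
      have hq : c₄*L^2 + c₃*L + 1 = 0 := by
        have hfac : L * (c₄*L^2+c₃*L+1) = c₄*L^3+c₃*L^2+L := by ring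
        rw [← hPL0] at hfac
        rcases mul_eq_zero.1 hfac with h | h
        · exact absurd h hLne
        · exact h
      have hfact : ∀ x : ℝ, c₄*x^3+c₃*x^2+x = x * (x - L) * (c₄*x - 1/L) := by
        intro x
        field_simp
        linear_combination x^2 * hq
      have hfac2 : ∀ s ∈ Ioi (0:ℝ), 0 < c₄ * g s - 1/L := by
        intro s hs
        have h := hPg s hs
        rw [hfact] at h
        have h1 : 0 < g s * (g s - L) := mul_pos (hgpos s hs) (sub_pos.2 (hgL s hs))
        by_contra hle
        push_neg at hle
        nlinarith [mul_nonpos_of_nonneg_of_nonpos h1.le hle]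
      have hc₄ : 0 < c₄ := by
        have h1 := hfac2 1 (by norm_num)
        have h2 : 0 < 1/L := by positivity
        have h3 := hgpos 1 (by norm_num)
        by_contra hc
        push_neg at hc
        nlinarith [mul_nonpos_of_nonpos_of_nonneg hc h3.le]
      obtain ⟨M, hMdef⟩ : ∃ M : ℝ, M = 1/(c₄*L) := ⟨_, rfl⟩
      have hMpos : 0 < M := by rw [hMdef]; positivity
      have hML : c₄ * M = 1/L := by rw [hMdef]; field_simp
      have hgM : ∀ s ∈ Ioi (0:ℝ), M < g s := by
        intro s hs
        have h := hfac2 s hs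
        rw [← hML] at h
        have : c₄ * M < c₄ * g s := by linarith
        exact (mul_lt_mul_iff_right₀ hc₄).mp this
      have hprod : ∀ s ∈ Ioi (0:ℝ),
          s * D s = g s * (g s - L) * (c₄ * g s - c₄ * M) := by
        intro s hs
        rw [hFg s hs, hFP _ (ne_of_gt (hgpos s hs)), hfact (g s), hML]
      by_cases hbig : ∃ s₀ ∈ Ioi (0:ℝ), 2*L + 2*M ≤ g s₀
      · obtain ⟨s₀, hs₀, hx₀⟩ := hbig
        have hcpos : 0 < c₄*(2*L+2*M)/4 := by positivity
        refine aux_divtop (fun s => -(g s)⁻¹) (fun s => D s / (g s)^2)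
          (c₄*(2*L+2*M)/4) s₀ 0 hcpos hs₀ ?_ ?_ ?_
        · intro s hs
          have hsp : (0:ℝ) < s := lt_trans hs₀ hs
          have h := ((hD s hsp).inv (ne_of_gt (hgpos s hsp))).neg
          rw [neg_div, neg_neg] at h
          exact h
        · intro s hs
          have hsp : (0:ℝ) < s := lt_trans hs₀ hs
          have hgs0 := hgpos s hsp
          have hx : 2*L+2*M ≤ g s := le_trans hx₀ ((hsmono.monotoneOn) hs₀ hsp (le_of_lt hs))
          have h2 := hprod s hsp
          rw [div_le_div_iff₀ hsp (pow_pos hgs0 2)]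
          have a1 : L ≤ g s / 2 := by linarith
          have a2 : M ≤ g s / 2 := by linarith
          calc c₄*(2*L+2*M)/4 * (g s)^2 ≤ c₄*(g s)/4 * (g s)^2 := by
                have : c₄*(2*L+2*M) ≤ c₄*(g s) := by nlinarith
                nlinarith [sq_nonneg (g s)]
            _ = c₄ * g s * ((g s/2) * (g s/2)) := by ring
            _ ≤ c₄ * g s * ((g s - L) * (g s - M)) := by
                have b1 : (0:ℝ) ≤ c₄ * g s := by positivity
                have b2 : (g s/2) * (g s/2) ≤ (g s - L) * (g s - M) := by nlinarith
                exact mul_le_mul_of_nonneg_left b2 b1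
            _ = g s * (g s - L) * (c₄ * g s - c₄ * M) := by ring
            _ = s * D s := h2.symm
            _ = D s * s := mul_comm _ _
        · intro s hs
          have hsp : (0:ℝ) < s := lt_trans hs₀ hs
          simp only [neg_nonpos]
          exact inv_nonneg.2 (hgpos s hsp).le
      · push_neg at hbig
        have h1 : (1:ℝ) ∈ Ioi (0:ℝ) := by norm_num
        have hg1 := hgpos 1 h1
        have hg1L := hgL 1 h1
        have hg1f := hfac2 1 h1
        have hcpos : 0 < g 1 * (g 1 - L) * (c₄ * g 1 - 1/L) :=
          mul_pos (mul_pos hg1 (by linarith)) hg1f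
        refine aux_divtop g D (g 1 * (g 1 - L) * (c₄ * g 1 - 1/L)) 1 (2*L+2*M)
          hcpos one_pos (fun s hs => hD s (show (0:ℝ) < s from lt_trans one_pos hs)) ?_
          (fun s hs => (hbig s (show (0:ℝ) < s from lt_trans one_pos hs)).le)
        intro s hs
        have hsp : (0:ℝ) < s := lt_trans one_pos hs
        have hgs : g 1 ≤ g s := (hsmono.monotoneOn) h1 hsp (le_of_lt hs)
        have h2 := hprod s hsp
        rw [div_le_iff₀ hsp]
        have t1 : g 1 * (g 1 - L) ≤ g s * (g s - L) := by nlinarith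
        have t2 : c₄ * g 1 - 1/L ≤ c₄ * g s - 1/L := by nlinarith
        have t3 : g 1 * (g 1 - L) * (c₄ * g 1 - 1/L) ≤ g s * (g s - L) * (c₄ * g s - 1/L) :=
          mul_le_mul t1 t2 hg1f.le (by nlinarith)
        have h2' : D s * s = g s * (g s - L) * (c₄ * g s - 1/L) := by
          rw [mul_comm, hFg s hsp, hFP _ (ne_of_gt (hgpos s hsp))]
          exact hfact (g s)
        linarith
  · intro htend
    have hLeq : L = 0 := tendsto_nhds_unique htendL htend
    have hsmall0 : ∀ δ : ℝ, 0 < δ → ∃ s ∈ Ioi (0:ℝ), g s < δ := fun δ hδ =>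
      hsmall δ (by rw [hLeq]; exact hδ)
    have hNg : ∀ s ∈ Ioi (0:ℝ),
        0 < c₄*(g s)^(m+4) + c₃*(g s)^(m+3) + (g s)^(m+2) + c₁*(g s) + c₀ := by
      intro s hs
      have hgs := hgpos s hs
      have h := hFgpos s hs
      have heq : c₄*(g s)^(m+4) + c₃*(g s)^(m+3) + (g s)^(m+2) + c₁*(g s) + c₀
          = F (g s) * (g s)^(m+1) := by
        rw [hF _ (ne_of_gt hgs)]
        field_simp
      rw [heq]
      exact mul_pos h (pow_pos hgs _)
    have hc₀ : c₀ = 0 := by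
      rcases lt_trichotomy c₀ 0 with h | h | h
      · exfalso
        have hcont : ContinuousAt (fun x : ℝ => c₄*x^(m+4)+c₃*x^(m+3)+x^(m+2)+c₁*x+c₀) 0 := by
          fun_prop
        have h0 : c₄*(0:ℝ)^(m+4)+c₃*(0:ℝ)^(m+3)+(0:ℝ)^(m+2)+c₁*(0:ℝ)+c₀ = c₀ := by
          rw [zero_pow (by omega : m+4 ≠ 0), zero_pow (by omega : m+3 ≠ 0),
            zero_pow (by omega : m+2 ≠ 0)]
          ring
        have htc : Tendsto (fun x : ℝ => c₄*x^(m+4)+c₃*x^(m+3)+x^(m+2)+c₁*x+c₀)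
            (nhds 0) (nhds c₀) := by
          have := hcont.tendsto
          rwa [h0] at this
        have hev : ∀ᶠ x in nhds (0:ℝ), c₄*x^(m+4)+c₃*x^(m+3)+x^(m+2)+c₁*x+c₀ < 0 :=
          htc.eventually (eventually_lt_nhds h)
        rw [Metric.eventually_nhds_iff] at hev
        obtain ⟨δ, hδ, hball⟩ := hev
        obtain ⟨s, hs, hgs⟩ := hsmall0 δ hδ
        have hlt : c₄*(g s)^(m+4)+c₃*(g s)^(m+3)+(g s)^(m+2)+c₁*(g s)+c₀ < 0 := by
          apply hball
          rw [Real.dist_eq, sub_zero, abs_of_pos (hgpos s hs)]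
          exact hgs
        linarith [hNg s hs]
      · exact h
      · exfalso
        have hcont : ContinuousAt (fun x : ℝ => c₄*x^(m+4)+c₃*x^(m+3)+x^(m+2)+c₁*x+c₀) 0 := by
          fun_prop
        have h0 : c₄*(0:ℝ)^(m+4)+c₃*(0:ℝ)^(m+3)+(0:ℝ)^(m+2)+c₁*(0:ℝ)+c₀ = c₀ := by
          rw [zero_pow (by omega : m+4 ≠ 0), zero_pow (by omega : m+3 ≠ 0),
            zero_pow (by omega : m+2 ≠ 0)]
          ring
        have htc : Tendsto (fun x : ℝ => c₄*x^(m+4)+c₃*x^(m+3)+x^(m+2)+c₁*x+c₀)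
            (nhds 0) (nhds c₀) := by
          have := hcont.tendsto
          rwa [h0] at this
        have hev : ∀ᶠ x in nhds (0:ℝ), c₀/2 < c₄*x^(m+4)+c₃*x^(m+3)+x^(m+2)+c₁*x+c₀ :=
          htc.eventually (eventually_gt_nhds (half_lt_self h))
        rw [Metric.eventually_nhds_iff] at hev
        obtain ⟨δ, hδ, hball⟩ := hev
        obtain ⟨y, hy, hgy⟩ := hsmall0 δ hδ
        refine aux_div0 (fun s => (g s)^(m+2)) (fun s => ((m+2:ℕ):ℝ)*(g s)^(m+1)*D s)
          (((m+2:ℕ):ℝ)*(c₀/2)) y 0 (by positivity) hy ?_ ?_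
          (fun s hs => pow_nonneg (hgpos s hs.1).le _)
        · intro s hs
          show HasDerivAt (g ^ (m+2)) _ s
          simpa using (hD s hs.1).pow (m+2)
        · intro s hs
          have hsp := hs.1
          have hgs := hgpos s hsp
          have hlt : g s < δ := lt_trans (hsmono hsp hy hs.2) hgy
          have hnum : c₀/2 < c₄*(g s)^(m+4)+c₃*(g s)^(m+3)+(g s)^(m+2)+c₁*(g s)+c₀ := by
            apply hball
            rw [Real.dist_eq, sub_zero, abs_of_pos hgs]
            exact hlt
          rw [div_le_iff₀ hsp]
          have hFgs : s * D s = F (g s) := hFg s hsp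
          rw [hF _ (ne_of_gt hgs)] at hFgs
          have hkey : (g s)^(m+1) * (D s * s)
              = c₄*(g s)^(m+4)+c₃*(g s)^(m+3)+(g s)^(m+2)+c₁*(g s)+c₀ := by
            rw [mul_comm (D s) s, hFgs]
            field_simp
          have h3 : c₀/2 ≤ (g s)^(m+1) * (D s * s) := by rw [hkey]; linarith
          calc ((m+2:ℕ):ℝ)*(c₀/2) ≤ ((m+2:ℕ):ℝ) * ((g s)^(m+1) * (D s * s)) :=
                mul_le_mul_of_nonneg_left h3 (by positivity)
            _ = ((m+2:ℕ):ℝ)*(g s)^(m+1)*D s * s := by ring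
    subst hc₀
    have hQg : ∀ s ∈ Ioi (0:ℝ), 0 < c₄*(g s)^(m+3)+c₃*(g s)^(m+2)+(g s)^(m+1)+c₁ := by
      intro s hs
      have hgs := hgpos s hs
      have h := hNg s hs
      have heq : c₄*(g s)^(m+4) + c₃*(g s)^(m+3) + (g s)^(m+2) + c₁*(g s) + 0
          = g s * (c₄*(g s)^(m+3)+c₃*(g s)^(m+2)+(g s)^(m+1)+c₁) := by ring
      rw [heq] at h
      by_contra hcon
      push_neg at hcon
      nlinarith [mul_nonpos_of_nonneg_of_nonpos hgs.le hcon]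
    have hc₁ : c₁ = 0 := by
      rcases lt_trichotomy c₁ 0 with h | h | h
      · exfalso
        have hcont : ContinuousAt (fun x : ℝ => c₄*x^(m+3)+c₃*x^(m+2)+x^(m+1)+c₁) 0 := by
          fun_prop
        have h0 : c₄*(0:ℝ)^(m+3)+c₃*(0:ℝ)^(m+2)+(0:ℝ)^(m+1)+c₁ = c₁ := by
          rw [zero_pow (by omega : m+3 ≠ 0), zero_pow (by omega : m+2 ≠ 0),
            zero_pow (by omega : m+1 ≠ 0)]
          ring
        have htc : Tendsto (fun x : ℝ => c₄*x^(m+3)+c₃*x^(m+2)+x^(m+1)+c₁)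
            (nhds 0) (nhds c₁) := by
          have := hcont.tendsto
          rwa [h0] at this
        have hev : ∀ᶠ x in nhds (0:ℝ), c₄*x^(m+3)+c₃*x^(m+2)+x^(m+1)+c₁ < 0 :=
          htc.eventually (eventually_lt_nhds h)
        rw [Metric.eventually_nhds_iff] at hev
        obtain ⟨δ, hδ, hball⟩ := hev
        obtain ⟨s, hs, hgs⟩ := hsmall0 δ hδ
        have hlt : c₄*(g s)^(m+3)+c₃*(g s)^(m+2)+(g s)^(m+1)+c₁ < 0 := by
          apply hball
          rw [Real.dist_eq, sub_zero, abs_of_pos (hgpos s hs)]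
          exact hgs
        linarith [hQg s hs]
      · exact h
      · exfalso
        have hcont : ContinuousAt (fun x : ℝ => c₄*x^(m+3)+c₃*x^(m+2)+x^(m+1)+c₁) 0 := by
          fun_prop
        have h0 : c₄*(0:ℝ)^(m+3)+c₃*(0:ℝ)^(m+2)+(0:ℝ)^(m+1)+c₁ = c₁ := by
          rw [zero_pow (by omega : m+3 ≠ 0), zero_pow (by omega : m+2 ≠ 0),
            zero_pow (by omega : m+1 ≠ 0)]
          ring
        have htc : Tendsto (fun x : ℝ => c₄*x^(m+3)+c₃*x^(m+2)+x^(m+1)+c₁)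
            (nhds 0) (nhds c₁) := by
          have := hcont.tendsto
          rwa [h0] at this
        have hev : ∀ᶠ x in nhds (0:ℝ), c₁/2 < c₄*x^(m+3)+c₃*x^(m+2)+x^(m+1)+c₁ :=
          htc.eventually (eventually_gt_nhds (half_lt_self h))
        rw [Metric.eventually_nhds_iff] at hev
        obtain ⟨δ, hδ, hball⟩ := hev
        obtain ⟨y, hy, hgy⟩ := hsmall0 δ hδ
        refine aux_div0 (fun s => (g s)^(m+1)) (fun s => ((m+1:ℕ):ℝ)*(g s)^m*D s)
          (((m+1:ℕ):ℝ)*(c₁/2)) y 0 (by positivity) hy ?_ ?_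
          (fun s hs => pow_nonneg (hgpos s hs.1).le _)
        · intro s hs
          show HasDerivAt (g ^ (m+1)) _ s
          simpa using (hD s hs.1).pow (m+1)
        · intro s hs
          have hsp := hs.1
          have hgs := hgpos s hsp
          have hlt : g s < δ := lt_trans (hsmono hsp hy hs.2) hgy
          have hnum : c₁/2 < c₄*(g s)^(m+3)+c₃*(g s)^(m+2)+(g s)^(m+1)+c₁ := by
            apply hball
            rw [Real.dist_eq, sub_zero, abs_of_pos hgs]
            exact hlt
          rw [div_le_iff₀ hsp]
          have hFgs : s * D s = F (g s) := hFg s hsp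
          rw [hF _ (ne_of_gt hgs)] at hFgs
          have hkey : (g s)^m * (D s * s)
              = c₄*(g s)^(m+3)+c₃*(g s)^(m+2)+(g s)^(m+1)+c₁ := by
            rw [mul_comm (D s) s, hFgs]
            field_simp
            ring
          have h3 : c₁/2 ≤ (g s)^m * (D s * s) := by rw [hkey]; linarith
          calc ((m+1:ℕ):ℝ)*(c₁/2) ≤ ((m+1:ℕ):ℝ) * ((g s)^m * (D s * s)) :=
                mul_le_mul_of_nonneg_left h3 (by positivity)
            _ = ((m+1:ℕ):ℝ)*(g s)^m*D s * s := by ring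
    exact ⟨rfl, hc₁⟩
end

section
/- Suppose c₄ ≠ 0, c₀ = c₁ = 0, and there exists a smooth strictly increasing g : (0,∞) → ℝ with g > 0, lim_{s→0⁺} g(s) = A > 0, lim_{s→∞} g(s) = B, satisfying s·g'(s) = c₄g³ + c₃g² + g. Then a contradiction follows; i.e., no such solution with A > 0 exists. -/
open Set Filter

theorem stmt_11 (c₃ c₄ : ℝ) (hc₄ : c₄ ≠ 0) (g : ℝ → ℝ) (A B : ℝ)
    (hsm : ContDiffOn ℝ (⊤ : ℕ∞) g (Ioi 0))
    (hmono : StrictMonoOn g (Ioi 0))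
    (hpos : ∀ s ∈ Ioi (0:ℝ), 0 < g s)
    (hA : Tendsto g (nhdsWithin 0 (Ioi 0)) (nhds A)) (hApos : 0 < A)
    (hB : Tendsto g atTop (nhds B))
    (hode : ∀ s ∈ Ioi (0:ℝ),
      s * deriv g s = c₄ * g s ^ 3 + c₃ * g s ^ 2 + g s) :
    False := by
  set H : ℝ → ℝ := fun x => c₄ * x ^ 3 + c₃ * x ^ 2 + x with hHdef
  have hHcont : Continuous H := by fun_prop
  have hdiffOn : DifferentiableOn ℝ g (Ioi 0) := hsm.differentiableOn (by simp)
  have hdiff : ∀ s ∈ Ioi (0:ℝ), HasDerivAt g (deriv g s) s := fun s hs =>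
    (hdiffOn.differentiableAt (isOpen_Ioi.mem_nhds hs)).hasDerivAt
  have hcontOn : ContinuousOn g (Ioi 0) := hdiffOn.continuousOn
  -- bounds on g
  have hgA : ∀ s ∈ Ioi (0:ℝ), A < g s := by
    intro s hs
    have hs0 : (0:ℝ) < s := hs
    have h1 : A ≤ g (s/2) := by
      refine le_of_tendsto hA ?_
      filter_upwards [Ioo_mem_nhdsGT_of_mem (⟨le_refl (0:ℝ), by linarith⟩ : (0:ℝ) ∈ Ico (0:ℝ) (s/2))] with t ht
      exact (hmono ht.1 (by simp [Set.mem_Ioi]; linarith) ht.2).le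
    exact lt_of_le_of_lt h1 (hmono (by simp [Set.mem_Ioi]; linarith) hs (by linarith))
  have hgB : ∀ s ∈ Ioi (0:ℝ), g s < B := by
    intro s hs
    have hs0 : (0:ℝ) < s := hs
    have h1 : g (s+1) ≤ B := by
      refine ge_of_tendsto hB ?_
      filter_upwards [eventually_ge_atTop (s+1)] with t ht
      rcases eq_or_lt_of_le ht with h | h
      · exact le_of_eq (by rw [h])
      · exact (hmono (by simp [Set.mem_Ioi]; linarith) (by simp [Set.mem_Ioi]; linarith) h).le
    exact lt_of_lt_of_le (hmono hs (by simp [Set.mem_Ioi]; linarith) (by linarith)) h1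
  have hAB : A < B := lt_trans (hgA 1 (by norm_num)) (hgB 1 (by norm_num))
  have hBpos : 0 < B := lt_trans hApos hAB
  -- derivative of the comparison function
  have hphi : ∀ (r : ℝ) (t : ℝ), t ∈ Ioi (0:ℝ) →
      HasDerivAt (fun s => g s + r * Real.log s) ((H (g t) + r) / t) t := by
    intro r t ht
    have ht0 : (0:ℝ) < t := ht
    have h1 : HasDerivAt (fun s => g s + r * Real.log s) (deriv g t + r * t⁻¹) t :=
      (hdiff t ht).add ((Real.hasDerivAt_log (ne_of_gt ht0)).const_mul r)
    have h2 : deriv g t + r * t⁻¹ = (H (g t) + r) / t := by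
      have h3 := hode t ht
      have h4 : H (g t) = c₄ * g t ^ 3 + c₃ * g t ^ 2 + g t := rfl
      rw [h4]
      field_simp
      linarith [h3]
    rwa [h2] at h1
  have hphicont : ∀ (r : ℝ), ContinuousOn (fun s => g s + r * Real.log s) (Ioi 0) := by
    intro r
    exact hcontOn.add ((Real.continuousOn_log.mono (fun x hx => ne_of_gt hx)).const_smul r)
  -- H vanishes at A
  have hHA : H A = 0 := by
    by_contra hne
    set c := H A with hc
    clear_value c
    have hcomp : Tendsto (fun s => H (g s)) (nhdsWithin 0 (Ioi 0)) (nhds c) := by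
      rw [hc]; exact (hHcont.tendsto A).comp hA
    have hev : ∀ᶠ s in nhdsWithin (0:ℝ) (Ioi 0), |H (g s) - c| < |c| / 2 := by
      have := Metric.tendsto_nhds.mp hcomp (|c|/2) (by positivity)
      simpa [Real.dist_eq] using this
    obtain ⟨u, hu, hsub⟩ := mem_nhdsGT_iff_exists_Ioo_subset.mp hev
    have hu0 : (0:ℝ) < u := hu
    set s₁ := u / 2 with hs₁
    have hs₁0 : (0:ℝ) < s₁ := by positivity
    have hkey : ∀ t ∈ Ioc (0:ℝ) s₁, |H (g t) - c| < |c| / 2 := by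
      intro t ht
      exact hsub ⟨ht.1, lt_of_le_of_lt ht.2 (by linarith)⟩
    set r := -(c/2) with hr
    clear_value r
    set φ : ℝ → ℝ := fun s => g s + r * Real.log s with hφ
    have hφcont : ContinuousOn φ (Ioc 0 s₁) :=
      (hphicont r).mono (fun x hx => hx.1)
    have hφderiv : ∀ t ∈ Ioo (0:ℝ) s₁, deriv φ t = (H (g t) + r) / t := by
      intro t ht
      exact (hphi r t ht.1).deriv
    have hevmem : ∀ᶠ s in nhdsWithin (0:ℝ) (Ioi 0), s ∈ Ioo (0:ℝ) s₁ :=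
      Ioo_mem_nhdsGT_of_mem ⟨le_refl 0, hs₁0⟩
    rcases lt_or_gt_of_ne hne with hcneg | hcpos
    · -- c < 0 : φ strictly antitone near 0, but φ → atBot
      have habs : |c| = -c := abs_of_neg hcneg
      have hanti : StrictAntiOn φ (Ioc 0 s₁) := by
        refine strictAntiOn_of_deriv_neg (convex_Ioc 0 s₁) hφcont ?_
        intro t ht
        rw [interior_Ioc] at ht
        rw [hφderiv t ht]
        have h1 := hkey t ⟨ht.1, ht.2.le⟩
        rw [habs] at h1
        have h2 : H (g t) + r < 0 := by
          have := abs_lt.mp h1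
          simp only [hr]; linarith [this.1, this.2]
        exact div_neg_of_neg_of_pos h2 ht.1
      have hbot : Tendsto φ (nhdsWithin 0 (Ioi 0)) atBot := by
        have hr0 : (0:ℝ) < r := by simp only [hr]; linarith
        exact hA.add_atBot (Real.tendsto_log_nhdsGT_zero.const_mul_atBot hr0)
      have hev2 : ∀ᶠ s in nhdsWithin (0:ℝ) (Ioi 0), φ s < φ s₁ :=
        hbot.eventually_lt_atBot (φ s₁)
      obtain ⟨s, hsmem, hslt⟩ := (hevmem.and hev2).exists
      exact absurd hslt (not_lt.mpr (hanti ⟨hsmem.1, hsmem.2.le⟩ ⟨hs₁0, le_refl _⟩ hsmem.2).le)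
    · -- c > 0 : φ strictly monotone near 0, but φ → atTop
      have habs : |c| = c := abs_of_pos hcpos
      have hmon : StrictMonoOn φ (Ioc 0 s₁) := by
        refine strictMonoOn_of_deriv_pos (convex_Ioc 0 s₁) hφcont ?_
        intro t ht
        rw [interior_Ioc] at ht
        rw [hφderiv t ht]
        have h1 := hkey t ⟨ht.1, ht.2.le⟩
        rw [habs] at h1
        have h2 : 0 < H (g t) + r := by
          have := abs_lt.mp h1
          simp only [hr]; linarith [this.1, this.2]
        exact div_pos h2 ht.1
      have htop : Tendsto φ (nhdsWithin 0 (Ioi 0)) atTop := by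
        have hr0 : r < 0 := by simp only [hr]; linarith
        exact hA.add_atTop (Real.tendsto_log_nhdsGT_zero.const_mul_atBot_of_neg hr0)
      have hev2 : ∀ᶠ s in nhdsWithin (0:ℝ) (Ioi 0), φ s₁ < φ s :=
        htop.eventually_gt_atTop (φ s₁)
      obtain ⟨s, hsmem, hslt⟩ := (hevmem.and hev2).exists
      exact absurd hslt (not_lt.mpr (hmon ⟨hsmem.1, hsmem.2.le⟩ ⟨hs₁0, le_refl _⟩ hsmem.2).le)
  -- H vanishes at B
  have hHB : H B = 0 := by
    by_contra hne
    set c := H B with hc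
    clear_value c
    have hcomp : Tendsto (fun s => H (g s)) atTop (nhds c) := by
      rw [hc]; exact (hHcont.tendsto B).comp hB
    have hev : ∀ᶠ s in atTop, |H (g s) - c| < |c| / 2 := by
      have := Metric.tendsto_nhds.mp hcomp (|c|/2) (by positivity)
      simpa [Real.dist_eq] using this
    obtain ⟨u, hu⟩ := hev.exists_forall_of_atTop
    set s₁ := max u 1 with hs₁
    have hs₁0 : (0:ℝ) < s₁ := lt_of_lt_of_le zero_lt_one (le_max_right u 1)
    have hkey : ∀ t ∈ Ici s₁, |H (g t) - c| < |c| / 2 := by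
      intro t ht
      exact hu t (le_trans (le_max_left u 1) ht)
    set r := -(c/2) with hr
    clear_value r
    set φ : ℝ → ℝ := fun s => g s + r * Real.log s with hφ
    have hφcont : ContinuousOn φ (Ici s₁) :=
      (hphicont r).mono (fun x hx => lt_of_lt_of_le hs₁0 hx)
    have hφderiv : ∀ t ∈ Ioi s₁, deriv φ t = (H (g t) + r) / t := by
      intro t ht
      exact (hphi r t (lt_trans hs₁0 ht)).deriv
    have hevmem : ∀ᶠ s in atTop, s₁ < s := eventually_gt_atTop s₁
    rcases lt_or_gt_of_ne hne with hcneg | hcpos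
    · -- c < 0 : φ strictly antitone on [s₁,∞), but φ → atTop
      have habs : |c| = -c := abs_of_neg hcneg
      have hanti : StrictAntiOn φ (Ici s₁) := by
        refine strictAntiOn_of_deriv_neg (convex_Ici s₁) hφcont ?_
        intro t ht
        rw [interior_Ici] at ht
        rw [hφderiv t ht]
        have h1 := hkey t (Set.mem_Ici.mpr (le_of_lt (Set.mem_Ioi.mp ht)))
        rw [habs] at h1
        have h2 : H (g t) + r < 0 := by
          have := abs_lt.mp h1
          simp only [hr]; linarith [this.1, this.2]
        exact div_neg_of_neg_of_pos h2 (lt_trans hs₁0 ht)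
      have htop : Tendsto φ atTop atTop := by
        have hr0 : (0:ℝ) < r := by simp only [hr]; linarith
        exact hB.add_atTop (Real.tendsto_log_atTop.const_mul_atTop hr0)
      have hev2 : ∀ᶠ s in atTop, φ s₁ < φ s := htop.eventually_gt_atTop (φ s₁)
      obtain ⟨s, hsmem, hslt⟩ := (hevmem.and hev2).exists
      exact absurd hslt (not_lt.mpr (hanti (Set.mem_Ici.mpr (le_refl _)) (Set.mem_Ici.mpr hsmem.le) hsmem).le)
    · -- c > 0 : φ strictly monotone on [s₁,∞), but φ → atBot
      have habs : |c| = c := abs_of_pos hcpos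
      have hmon : StrictMonoOn φ (Ici s₁) := by
        refine strictMonoOn_of_deriv_pos (convex_Ici s₁) hφcont ?_
        intro t ht
        rw [interior_Ici] at ht
        rw [hφderiv t ht]
        have h1 := hkey t (Set.mem_Ici.mpr (le_of_lt (Set.mem_Ioi.mp ht)))
        rw [habs] at h1
        have h2 : 0 < H (g t) + r := by
          have := abs_lt.mp h1
          simp only [hr]; linarith [this.1, this.2]
        exact div_pos h2 (lt_trans hs₁0 ht)
      have hbot : Tendsto φ atTop atBot := by
        have hr0 : r < 0 := by simp only [hr]; linarith
        exact hB.add_atBot (Real.tendsto_log_atTop.const_mul_atTop_of_neg hr0)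
      have hev2 : ∀ᶠ s in atTop, φ s < φ s₁ := hbot.eventually_lt_atBot (φ s₁)
      obtain ⟨s, hsmem, hslt⟩ := (hevmem.and hev2).exists
      exact absurd hslt (not_lt.mpr (hmon (Set.mem_Ici.mpr (le_refl _)) (Set.mem_Ici.mpr hsmem.le) hsmem).le)
  -- find a point where H ∘ g is positive
  obtain ⟨t, htIoo, htd⟩ := exists_hasDerivAt_eq_slope g (deriv g) (by norm_num : (1:ℝ) < 2)
    (hcontOn.mono (fun x hx => lt_of_lt_of_le zero_lt_one hx.1))
    (fun x hx => hdiff x (lt_trans zero_lt_one hx.1))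
  have ht0 : (0:ℝ) < t := lt_trans zero_lt_one htIoo.1
  have hdpos : 0 < deriv g t := by
    rw [htd]
    have := hmono (by norm_num : (1:ℝ) ∈ Ioi (0:ℝ)) (by norm_num : (2:ℝ) ∈ Ioi (0:ℝ)) one_lt_two
    have h21 : (0:ℝ) < 2 - 1 := by norm_num
    exact div_pos (by linarith) h21
  have hHgt : 0 < H (g t) := by
    have h4 : H (g t) = c₄ * g t ^ 3 + c₃ * g t ^ 2 + g t := rfl
    rw [h4, ← hode t ht0]
    exact mul_pos ht0 hdpos
  -- algebra: contradiction
  set x := g t with hx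
  have hxA : A < x := hgA t ht0
  have hxB : x < B := hgB t ht0
  have hxpos : 0 < x := hpos t ht0
  have hPA : c₄ * A ^ 2 + c₃ * A + 1 = 0 := by
    have hA' : A * (c₄ * A ^ 2 + c₃ * A + 1) = 0 := by
      have h4 : H A = c₄ * A ^ 3 + c₃ * A ^ 2 + A := rfl
      rw [h4] at hHA; linear_combination hHA
    rcases mul_eq_zero.mp hA' with h | h
    · exact absurd h (ne_of_gt hApos)
    · exact h
  have hPB : c₄ * B ^ 2 + c₃ * B + 1 = 0 := by
    have hB' : B * (c₄ * B ^ 2 + c₃ * B + 1) = 0 := by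
      have h4 : H B = c₄ * B ^ 3 + c₃ * B ^ 2 + B := rfl
      rw [h4] at hHB; linear_combination hHB
    rcases mul_eq_zero.mp hB' with h | h
    · exact absurd h (ne_of_gt hBpos)
    · exact h
  have hPx : 0 < c₄ * x ^ 2 + c₃ * x + 1 := by
    have h1 : 0 < x * (c₄ * x ^ 2 + c₃ * x + 1) := by
      have h4 : H x = c₄ * x ^ 3 + c₃ * x ^ 2 + x := rfl
      rw [h4] at hHgt; nlinarith [hHgt]
    by_contra hle
    push_neg at hle
    nlinarith [mul_nonpos_of_nonneg_of_nonpos hxpos.le hle]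
  -- c₃ = -c₄(A+B), c₄ A B = 1
  have h3 : c₄ * (A + B) + c₃ = 0 := by
    have h0 : (A - B) * (c₄ * (A + B) + c₃) = 0 := by linear_combination hPA - hPB
    rcases mul_eq_zero.mp h0 with h | h
    · exact absurd h (sub_ne_zero.mpr (ne_of_lt hAB))
    · exact h
  have h4 : c₄ * A * B = 1 := by linear_combination A * h3 - hPA
  have hc₄pos : 0 < c₄ := by
    by_contra hle
    push_neg at hle
    nlinarith [mul_pos hApos hBpos]
  nlinarith [mul_pos (mul_pos hc₄pos (sub_pos.mpr hxA)) (sub_pos.mpr hxB), hPx, h3, h4]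
end

section
/- Let 0 < α < β and let g : (0,∞) → (α,β) be a smooth strictly increasing solution of s·g'(s) = −(1/(2α+β))·(g(s)−α)²·(g(s)−β)/g(s) with lim_{s→0⁺} g(s) = α and lim_{s→∞} g(s) = β. Then for any s₀ > 0, the integral ∫₀^{s₀} √(g'(s)/s) ds diverges. -/
open Set Filter MeasureTheory

theorem stmt_15 (α β : ℝ) (hα : 0 < α) (hαβ : α < β) (g : ℝ → ℝ)
    (hsm : ContDiffOn ℝ (⊤ : ℕ∞) g (Ioi 0))
    (hmono : StrictMonoOn g (Ioi 0))
    (hrange : ∀ s ∈ Ioi (0:ℝ), g s ∈ Ioo α β)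
    (hode : ∀ s ∈ Ioi (0:ℝ),
      s * deriv g s = -(1 / (2 * α + β)) * (g s - α) ^ 2 * (g s - β) / g s)
    (hlim0 : Tendsto g (nhdsWithin 0 (Ioi 0)) (nhds α))
    (hlimTop : Tendsto g atTop (nhds β)) :
    ∀ s₀ : ℝ, 0 < s₀ →
      ¬ MeasureTheory.IntegrableOn (fun s => Real.sqrt (deriv g s / s)) (Ioo 0 s₀) := by
  intro s₀ hs₀ hint
  have h2ab : (0:ℝ) < 2 * α + β := by linarith
  set C : ℝ := 1 / (2 * α + β) with hCdef
  have hC : 0 < C := by rw [hCdef]; positivity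
  have hβ : (0:ℝ) < β := by linarith
  have hgα : ∀ s ∈ Ioi (0:ℝ), α < g s := fun s hs => (hrange s hs).1
  have hgβ : ∀ s ∈ Ioi (0:ℝ), g s < β := fun s hs => (hrange s hs).2
  have hgpos : ∀ s ∈ Ioi (0:ℝ), 0 < g s := fun s hs => lt_trans hα (hgα s hs)
  have hdiff : ∀ s ∈ Ioi (0:ℝ), DifferentiableAt ℝ g s := by
    intro s hs
    exact (hsm.differentiableOn (by simp)).differentiableAt (isOpen_Ioi.mem_nhds hs)
  -- derivative formula
  have hderiv : ∀ s ∈ Ioi (0:ℝ),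
      deriv g s = C * (g s - α) ^ 2 * (β - g s) / (g s * s) := by
    intro s hs
    have hs' : (0:ℝ) < s := hs
    have hg := hgpos s hs
    have hg0 : g s ≠ 0 := hg.ne'
    have hs0 : s ≠ 0 := hs'.ne'
    have h := hode s hs
    have h1 : deriv g s = (-(C) * (g s - α) ^ 2 * (g s - β) / g s) / s := by
      rw [eq_div_iff hs0]
      rw [mul_comm] at h
      linarith [h]
    rw [h1]
    field_simp
    ring
  -- constants
  set K : ℝ := C * (β - α) / α with hKdef
  have hK : 0 < K := by
    rw [hKdef]
    exact div_pos (mul_pos hC (by linarith)) hα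
  have hKα : K * α = C * (β - α) := by
    rw [hKdef]; field_simp
  have hgs₀α : α < g s₀ := hgα s₀ hs₀
  have hgs₀β : g s₀ < β := hgβ s₀ hs₀
  set A : ℝ := (g s₀ - α)⁻¹ with hAdef
  have hA : 0 < A := by
    rw [hAdef]
    exact inv_pos.2 (by linarith)
  set L : ℝ → ℝ := fun s => A + K * (Real.log s₀ - Real.log s) with hLdef
  have hLpos : ∀ s ∈ Ioc (0:ℝ) s₀, 0 < L s := by
    intro s hs
    have hlog : Real.log s ≤ Real.log s₀ := Real.log_le_log hs.1 hs.2
    have h0 : 0 ≤ K * (Real.log s₀ - Real.log s) := by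
      apply mul_nonneg hK.le; linarith
    simp only [hLdef]; linarith
  -- monotone function H
  set H : ℝ → ℝ := fun s => (g s - α)⁻¹ + K * Real.log s with hHdef
  have hHderiv : ∀ s ∈ Ioi (0:ℝ),
      HasDerivAt H (-(deriv g s) / (g s - α) ^ 2 + K * s⁻¹) s := by
    intro s hs
    have hne : g s - α ≠ 0 := by have := hgα s hs; intro h; rw [sub_eq_zero] at h; linarith
    have h1 : HasDerivAt (fun t => g t - α) (deriv g s) s :=
      ((hdiff s hs).hasDerivAt).sub_const α
    have h2 := h1.inv hne
    have h3 := (Real.hasDerivAt_log (ne_of_gt (show (0:ℝ) < s from hs))).const_mul K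
    exact h2.add h3
  have hHnonneg : ∀ s ∈ Ioi (0:ℝ), 0 ≤ -(deriv g s) / (g s - α) ^ 2 + K * s⁻¹ := by
    intro s hs
    have hs' : (0:ℝ) < s := hs
    have hg := hgpos s hs
    have hgα' := hgα s hs
    have hgβ' := hgβ s hs
    have hne : g s - α ≠ 0 := by intro h; rw [sub_eq_zero] at h; linarith
    have hg0 : g s ≠ 0 := hg.ne'
    have hs0 : s ≠ 0 := hs'.ne'
    rw [hderiv s hs]
    have e : -(C * (g s - α) ^ 2 * (β - g s) / (g s * s)) / (g s - α) ^ 2 + K * s⁻¹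
        = (K * g s - C * (β - g s)) / (g s * s) := by
      field_simp
      ring
    rw [e]
    apply div_nonneg _ (mul_pos hg hs').le
    have h1 : C * (β - α) ≤ K * g s := by
      rw [← hKα]
      have := mul_le_mul_of_nonneg_left hgα'.le hK.le
      linarith
    have h2 : C * (β - g s) ≤ C * (β - α) := by
      apply mul_le_mul_of_nonneg_left _ hC.le
      linarith
    linarith
  have hHmono : MonotoneOn H (Ioi 0) := by
    apply monotoneOn_of_deriv_nonneg (convex_Ioi 0)
    · intro s hs
      exact (hHderiv s hs).differentiableAt.continuousAt.continuousWithinAt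
    · rw [interior_Ioi]
      exact fun s hs => (hHderiv s hs).differentiableAt.differentiableWithinAt
    · rw [interior_Ioi]
      intro s hs
      rw [(hHderiv s hs).deriv]
      exact hHnonneg s hs
  -- lower bound on g s - α
  have hgLB : ∀ s ∈ Ioo (0:ℝ) s₀, (L s)⁻¹ ≤ g s - α := by
    intro s hs
    have hs1 : s ∈ Ioi (0:ℝ) := hs.1
    have hgα' := hgα s hs1
    have hH := hHmono hs1 (mem_Ioi.2 hs₀) hs.2.le
    have hle : (g s - α)⁻¹ ≤ L s := by
      simp only [hHdef, hLdef, hAdef] at hH ⊢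
      linarith
    have h1 : 0 < (g s - α)⁻¹ := inv_pos.2 (by linarith)
    have := inv_anti₀ h1 hle
    rwa [inv_inv] at this
  -- epsilon
  set ε : ℝ := Real.sqrt (C * (β - g s₀) / β) with hεdef
  have hεarg : 0 < C * (β - g s₀) / β :=
    div_pos (mul_pos hC (by linarith)) hβ
  have hε2 : ε ^ 2 = C * (β - g s₀) / β := Real.sq_sqrt hεarg.le
  have hε : 0 < ε := Real.sqrt_pos.2 hεarg
  -- pointwise bound
  have hpt : ∀ s ∈ Ioo (0:ℝ) s₀, ε / (s * L s) ≤ Real.sqrt (deriv g s / s) := by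
    intro s hs
    have hs1 : s ∈ Ioi (0:ℝ) := hs.1
    have hs' : (0:ℝ) < s := hs.1
    have hg := hgpos s hs1
    have hgα' := hgα s hs1
    have hgβ' := hgβ s hs1
    have hgs₀ : g s < g s₀ := hmono hs1 (mem_Ioi.2 hs₀) hs.2
    have hL := hLpos s ⟨hs.1, hs.2.le⟩
    have hLB := hgLB s hs
    have hg0 : g s ≠ 0 := hg.ne'
    have hs0 : s ≠ 0 := hs'.ne'
    have hL0 : L s ≠ 0 := hL.ne'
    rw [hderiv s hs1]
    have hY : 0 ≤ C * (g s - α) ^ 2 * (β - g s) / (g s * s) / s := by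
      apply div_nonneg _ hs'.le
      apply div_nonneg _ (mul_pos hg hs').le
      apply mul_nonneg (mul_nonneg hC.le (sq_nonneg _)) (by linarith)
    rw [Real.le_sqrt (div_nonneg hε.le (mul_pos hs' hL).le) hY]
    have e1 : (ε / (s * L s)) ^ 2 = C * (β - g s₀) / β * ((L s)⁻¹) ^ 2 / s ^ 2 := by
      rw [div_pow, hε2]
      field_simp
      all_goals try ring
      all_goals tauto

    have e2 : C * (g s - α) ^ 2 * (β - g s) / (g s * s) / s
        = C * (β - g s) / g s * (g s - α) ^ 2 / s ^ 2 := by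
      field_simp
    rw [e1, e2]
    rw [div_le_div_iff_of_pos_right (pow_pos hs' 2)]
    have hfac : C * (β - g s₀) / β ≤ C * (β - g s) / g s := by
      apply div_le_div₀ (mul_nonneg hC.le (by linarith))
        (mul_le_mul_of_nonneg_left (by linarith) hC.le) hg hgβ'.le
    have key : ((L s)⁻¹) ^ 2 ≤ (g s - α) ^ 2 :=
      pow_le_pow_left₀ (inv_pos.2 hL).le hLB 2
    exact mul_le_mul hfac key (sq_nonneg _)
      (div_nonneg (mul_nonneg hC.le (by linarith)) hg.le)
  -- the antiderivative
  set φ : ℝ → ℝ := fun s => -(ε / K) * Real.log (L s) with hφdef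
  have hφderiv : ∀ s ∈ Ioc (0:ℝ) s₀, HasDerivAt φ (ε / (s * L s)) s := by
    intro s hs
    have hs' : (0:ℝ) < s := hs.1
    have hL := hLpos s hs
    have hK0 : K ≠ 0 := hK.ne'
    have hs0 : s ≠ 0 := hs'.ne'
    have hL0 : L s ≠ 0 := hL.ne'
    have h1 : HasDerivAt L (K * (0 - s⁻¹)) s := by
      apply HasDerivAt.const_add
      exact ((hasDerivAt_const s (Real.log s₀)).sub (Real.hasDerivAt_log hs0)).const_mul K
    have h2 : HasDerivAt (fun t => Real.log (L t)) ((L s)⁻¹ * (K * (0 - s⁻¹))) s := by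
      have := (Real.hasDerivAt_log hL0).comp s h1
      simpa [Function.comp_def] using this
    have h3 := h2.const_mul (-(ε / K))
    convert h3 using 1
    all_goals try field_simp
    all_goals try ring
    all_goals tauto
  -- FTC bound
  set M : ℝ := ∫ s in Ioo (0:ℝ) s₀, Real.sqrt (deriv g s / s) with hMdef
  have hbound : ∀ a ∈ Ioo (0:ℝ) s₀, φ s₀ - φ a ≤ M := by
    intro a ha
    have ha1 : 0 < a := ha.1
    have ha2 : a < s₀ := ha.2
    have hIccsub : Icc a s₀ ⊆ Ioc (0:ℝ) s₀ := fun x hx => ⟨lt_of_lt_of_le ha1 hx.1, hx.2⟩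
    have hcont : ContinuousOn (fun s => ε / (s * L s)) (Icc a s₀) := by
      apply ContinuousOn.div continuousOn_const
      · apply ContinuousOn.mul continuousOn_id
        apply ContinuousOn.add continuousOn_const
        apply ContinuousOn.mul continuousOn_const
        apply ContinuousOn.sub continuousOn_const
        apply Real.continuousOn_log.mono
        intro x hx
        simp only [mem_compl_iff, mem_singleton_iff]
        exact (lt_of_lt_of_le ha1 hx.1).ne'
      · intro x hx
        have h1 := hLpos x (hIccsub hx)
        have hx0 : 0 < x := lt_of_lt_of_le ha1 hx.1
        exact (mul_pos hx0 h1).ne'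
    have hII : IntervalIntegrable (fun s => ε / (s * L s)) volume a s₀ :=
      hcont.intervalIntegrable_of_Icc ha2.le
    have hFTC : ∫ s in a..s₀, ε / (s * L s) = φ s₀ - φ a := by
      apply intervalIntegral.integral_eq_sub_of_hasDerivAt _ hII
      intro x hx
      rw [uIcc_of_le ha2.le] at hx
      exact hφderiv x (hIccsub hx)
    rw [← hFTC, intervalIntegral.integral_of_le ha2.le, integral_Ioc_eq_integral_Ioo]
    have hsubset : Ioo a s₀ ⊆ Ioo (0:ℝ) s₀ := Ioo_subset_Ioo_left ha1.le
    have step1 : ∫ s in Ioo a s₀, ε / (s * L s)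
        ≤ ∫ s in Ioo a s₀, Real.sqrt (deriv g s / s) := by
      apply setIntegral_mono_on
      · exact hII.1.mono_set Ioo_subset_Ioc_self
      · exact hint.mono_set hsubset
      · exact measurableSet_Ioo
      · intro x hx
        exact hpt x (hsubset hx)
    have step2 : ∫ s in Ioo a s₀, Real.sqrt (deriv g s / s) ≤ M := by
      rw [hMdef]
      apply setIntegral_mono_set hint
      · filter_upwards with x using Real.sqrt_nonneg _
      · exact HasSubset.Subset.eventuallyLE hsubset
    linarith
  -- contradiction via divergence
  have htend : Tendsto (fun a => φ s₀ - φ a) (nhdsWithin 0 (Ioi 0)) atTop := by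
    have t0 : Tendsto (fun a => -Real.log a) (nhdsWithin (0:ℝ) (Ioi 0)) atTop :=
      tendsto_neg_atBot_atTop.comp Real.tendsto_log_nhdsGT_zero
    have t1 : Tendsto (fun a => Real.log s₀ - Real.log a) (nhdsWithin (0:ℝ) (Ioi 0)) atTop := by
      simp only [sub_eq_add_neg]
      exact tendsto_atTop_add_const_left _ _ t0
    have t2 : Tendsto (fun a => L a) (nhdsWithin (0:ℝ) (Ioi 0)) atTop := by
      apply tendsto_atTop_add_const_left
      exact t1.const_mul_atTop hK
    have t3 : Tendsto (fun a => Real.log (L a)) (nhdsWithin (0:ℝ) (Ioi 0)) atTop :=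
      Real.tendsto_log_atTop.comp t2
    have t4 : Tendsto (fun a => ε / K * Real.log (L a)) (nhdsWithin (0:ℝ) (Ioi 0)) atTop :=
      t3.const_mul_atTop (div_pos hε hK)
    have heq : (fun a => φ s₀ - φ a) = fun a => φ s₀ + ε / K * Real.log (L a) := by
      funext a
      simp only [hφdef]
      ring
    rw [heq]
    exact tendsto_atTop_add_const_left _ _ t4
  have hev : ∀ᶠ a in nhdsWithin (0:ℝ) (Ioi 0), M < φ s₀ - φ a :=
    htend.eventually (eventually_gt_atTop M)
  have hmem : Ioo (0:ℝ) s₀ ∈ nhdsWithin (0:ℝ) (Ioi 0) :=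
    Ioo_mem_nhdsGT_of_mem ⟨le_refl 0, hs₀⟩
  obtain ⟨a, h1, h2⟩ := (hev.and (Filter.eventually_mem_set.2 hmem)).exists
  linarith [hbound a h2]
end

section
/- For every positive integer k, setting γ = 2β, the pair (α, β) = ((1−8k)/(1+5k)·β, β) with any β > 0 satisfies −8β/5 < α < β, αβ ≠ 0, and (β − α)/(5α + 8β) = k. Consequently, for each k ≥ 1 there exist α < β < γ with −γ(γ+2β)/(2γ+β) < α, αβγ ≠ 0, satisfying the closing condition (β−α)(γ−β)² / (β·(αβ + 2αγ + 2βγ + γ²)) = k. -/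
theorem stmt_16 (k : ℕ) (hk : 1 ≤ k) :
    (∀ β : ℝ, 0 < β →
      -(8 * β / 5) < (1 - 8 * (k : ℝ)) / (1 + 5 * (k : ℝ)) * β ∧
      (1 - 8 * (k : ℝ)) / (1 + 5 * (k : ℝ)) * β < β ∧
      ((1 - 8 * (k : ℝ)) / (1 + 5 * (k : ℝ)) * β) * β ≠ 0 ∧
      (β - (1 - 8 * (k : ℝ)) / (1 + 5 * (k : ℝ)) * β) /
        (5 * ((1 - 8 * (k : ℝ)) / (1 + 5 * (k : ℝ)) * β) + 8 * β) = (k : ℝ)) ∧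
    ∃ α β γ : ℝ, α < β ∧ β < γ ∧
      -(γ * (γ + 2 * β)) / (2 * γ + β) < α ∧ α * β * γ ≠ 0 ∧
      (β - α) * (γ - β) ^ 2 /
        (β * (α * β + 2 * α * γ + 2 * β * γ + γ ^ 2)) = (k : ℝ) := by
  have hK : (1:ℝ) ≤ (k:ℝ) := by exact_mod_cast hk
  have hd : (0:ℝ) < 1 + 5 * (k:ℝ) := by linarith
  have hd' : (1 + 5 * (k:ℝ)) ≠ 0 := ne_of_gt hd
  have hnum : (1 - 8 * (k:ℝ)) ≠ 0 := by
    intro h; nlinarith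
  have main : ∀ β : ℝ, 0 < β →
      -(8 * β / 5) < (1 - 8 * (k : ℝ)) / (1 + 5 * (k : ℝ)) * β ∧
      (1 - 8 * (k : ℝ)) / (1 + 5 * (k : ℝ)) * β < β ∧
      ((1 - 8 * (k : ℝ)) / (1 + 5 * (k : ℝ)) * β) * β ≠ 0 ∧
      (β - (1 - 8 * (k : ℝ)) / (1 + 5 * (k : ℝ)) * β) /
        (5 * ((1 - 8 * (k : ℝ)) / (1 + 5 * (k : ℝ)) * β) + 8 * β) = (k : ℝ) := by
    intro β hβ
    have hden : 5 * ((1 - 8 * (k : ℝ)) / (1 + 5 * (k : ℝ)) * β) + 8 * β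
        = 13 / (1 + 5 * (k:ℝ)) * β := by
      field_simp; ring
    refine ⟨?_, ?_, ?_, ?_⟩
    · rw [div_mul_eq_mul_div, lt_div_iff₀ hd]; nlinarith
    · rw [div_mul_eq_mul_div, div_lt_iff₀ hd]; nlinarith
    · refine mul_ne_zero (mul_ne_zero (div_ne_zero hnum hd') (ne_of_gt hβ)) (ne_of_gt hβ)
    · rw [hden]
      rw [div_eq_iff (by positivity : (13 / (1 + 5 * (k:ℝ)) * β) ≠ 0)]
      field_simp; ring
  refine ⟨main, (1 - 8 * (k : ℝ)) / (1 + 5 * (k : ℝ)), 1, 2, ?_, by norm_num, ?_, ?_, ?_⟩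
  · have h := (main 1 one_pos).2.1
    rw [mul_one] at h
    exact h
  · have h := (main 1 one_pos).1
    rw [mul_one] at h
    norm_num
    linarith
  · have := (main 1 one_pos).2.2.1
    rw [mul_one] at this
    simpa using this
  · have h := (main 1 one_pos).2.2.2
    rw [mul_one] at h
    convert h using 2 <;> ring
end

section
/- Let α < β < γ with αβγ ≠ 0 and c₄ = 1/(γ² + 2βγ + 2αγ + αβ) > 0, and suppose g : (0,∞) → (β,γ) is a smooth strictly increasing solution of s·g'(s) = c₄·(g−α)(g−β)(g−γ)²/g with lim_{s→∞} g(s) = γ. Then the integral ∫_{s₀}^{∞} √(g'(s)/s) ds diverges for any s₀ > 0. -/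
open Set Filter

set_option maxHeartbeats 1000000 in
theorem stmt_17 (α β γ c₄ : ℝ) (h1 : α < β) (h2 : β < γ) (h3 : α * β * γ ≠ 0)
    (hc₄ : c₄ = 1 / (γ ^ 2 + 2 * β * γ + 2 * α * γ + α * β)) (hc₄pos : 0 < c₄)
    (g : ℝ → ℝ)
    (hsm : ContDiffOn ℝ (⊤ : ℕ∞) g (Ioi 0))
    (hmono : StrictMonoOn g (Ioi 0))
    (hrange : ∀ s ∈ Ioi (0:ℝ), g s ∈ Ioo β γ)
    (hode : ∀ s ∈ Ioi (0:ℝ),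
      s * deriv g s = c₄ * (g s - α) * (g s - β) * (g s - γ) ^ 2 / g s)
    (hlim : Tendsto g atTop (nhds γ)) :
    ∀ s₀ : ℝ, 0 < s₀ →
      ¬ MeasureTheory.IntegrableOn (fun s => Real.sqrt (deriv g s / s)) (Ioi s₀) := by
  intro s₀ hs₀ hint
  have hγne : γ ≠ 0 := by
    intro h; exact h3 (by rw [h, mul_zero])
  have hβα : (0:ℝ) < β - α := sub_pos.2 h1
  have hγβ : (0:ℝ) < γ - β := sub_pos.2 h2
  -- differentiability of g on Ioi 0
  have hgd : ∀ s ∈ Ioi (0:ℝ), HasDerivAt g (deriv g s) s := by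
    intro s hs
    exact ((hsm.contDiffAt (isOpen_Ioi.mem_nhds hs)).differentiableAt (by simp)).hasDerivAt
  -- γ > 0
  have hγpos : 0 < γ := by
    by_contra h
    push_neg at h
    have hγneg : γ < 0 := lt_of_le_of_ne h hγne
    have hderivneg : ∀ s ∈ interior (Icc (1:ℝ) 2), deriv g s < 0 := by
      intro s hs
      rw [interior_Icc] at hs
      have hsIoi : s ∈ Ioi (0:ℝ) := by
        have := hs.1; simp only [mem_Ioi]; linarith
      have hg := hrange s hsIoi
      have hgneg : g s < 0 := hg.2.trans hγneg
      have hnum : 0 < c₄ * (g s - α) * (g s - β) * (g s - γ) ^ 2 := by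
        have h4 : 0 < g s - α := by have := hg.1; linarith
        have h5 : 0 < g s - β := sub_pos.2 hg.1
        have h6 : g s - γ ≠ 0 := sub_ne_zero.2 hg.2.ne
        positivity
      have h7 : s * deriv g s < 0 := by
        rw [hode s hsIoi]
        exact div_neg_of_pos_of_neg hnum hgneg
      by_contra hcon
      push_neg at hcon
      have : 0 ≤ s * deriv g s := mul_nonneg (le_of_lt hsIoi) hcon
      linarith
    have hanti : StrictAntiOn g (Icc (1:ℝ) 2) := by
      refine strictAntiOn_of_deriv_neg (convex_Icc 1 2) ?_ hderivneg
      refine hsm.continuousOn.mono ?_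
      intro x hx; have := hx.1; simp only [mem_Ioi]; linarith
    have h8 : g 2 < g 1 :=
      hanti (by constructor <;> norm_num) (by constructor <;> norm_num) (by norm_num)
    have h9 : g 1 < g 2 := hmono (by norm_num) (by norm_num) (by norm_num)
    linarith
  -- choose s₁
  set ε : ℝ := min ((γ - β)/2) (γ/2) with hεdef
  have hεpos : 0 < ε := lt_min (by linarith) (by linarith)
  have hev : ∀ᶠ s in atTop, γ - ε < g s :=
    hlim.eventually (eventually_gt_nhds (by linarith))
  obtain ⟨s₁, hgs₁, hs₁big⟩ := (hev.and (eventually_gt_atTop (max s₀ 1))).exists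
  have hs₁1 : (1:ℝ) < s₁ := lt_of_le_of_lt (le_max_right _ _) hs₁big
  have hs₁0 : (0:ℝ) < s₁ := by linarith
  have hs₀s₁ : s₀ < s₁ := lt_of_le_of_lt (le_max_left _ _) hs₁big
  have hg_lb : ∀ s, s₁ ≤ s → γ - ε < g s := by
    intro s hs
    exact lt_of_lt_of_le hgs₁
      (hmono.monotoneOn (mem_Ioi.2 hs₁0) (mem_Ioi.2 (lt_of_lt_of_le hs₁0 hs)) hs)
  -- constants
  set C : ℝ := c₄ * (γ - α) * (γ - β) / (γ/2) with hCdef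
  have hC : 0 < C := by
    apply div_pos
    · apply mul_pos (mul_pos hc₄pos (by linarith)) hγβ
    · linarith
  set D2 : ℝ := c₄ * (β - α) * ((γ - β)/2) / γ with hD2def
  have hD2pos : 0 < D2 := div_pos (mul_pos (mul_pos hc₄pos hβα) (by linarith)) hγpos
  set D : ℝ := Real.sqrt D2 with hDdef
  have hD : 0 < D := Real.sqrt_pos.2 hD2pos
  have hDsq : D ^ 2 = D2 := Real.sq_sqrt hD2pos.le
  -- pointwise facts
  have hfacts : ∀ s, s₁ ≤ s → s ∈ Ioi (0:ℝ) ∧ γ/2 < g s ∧ (γ - β)/2 < g s - β ∧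
      0 < g s ∧ 0 < γ - g s ∧ g s - α ≤ γ - α ∧ g s - β ≤ γ - β ∧ β - α < g s - α := by
    intro s hs
    have hsIoi : s ∈ Ioi (0:ℝ) := mem_Ioi.2 (lt_of_lt_of_le hs₁0 hs)
    have hg := hrange s hsIoi
    have hlb := hg_lb s hs
    have hε1 : ε ≤ (γ - β)/2 := min_le_left _ _
    have hε2 : ε ≤ γ/2 := min_le_right _ _
    refine ⟨hsIoi, by linarith, by linarith, by linarith, by linarith [hg.2],
      by linarith [hg.2], by linarith [hg.2], by linarith [hg.1]⟩
  -- ODE-derived formula for deriv g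
  have hgderiv : ∀ s, s₁ ≤ s →
      deriv g s = c₄ * (g s - α) * (g s - β) * (γ - g s) ^ 2 / (g s * s) := by
    intro s hs
    obtain ⟨hsIoi, _, _, hgpos, _, _, _, _⟩ := hfacts s hs
    have hspos : (0:ℝ) < s := hsIoi
    have h := hode s hsIoi
    rw [eq_div_iff (by positivity : g s * s ≠ 0)]
    field_simp [hgpos.ne'] at h
    linear_combination h
  -- upper bound: deriv g s / (γ - g s)^2 ≤ C * s⁻¹
  have hC_bound : ∀ s, s₁ ≤ s → deriv g s / (γ - g s) ^ 2 ≤ C * s⁻¹ := by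
    intro s hs
    obtain ⟨hsIoi, hγ2, hgβ2, hgpos, hγg, hgαle, hgβle, hgαlb⟩ := hfacts s hs
    have hspos : (0:ℝ) < s := hsIoi
    rw [hgderiv s hs]
    have heq : c₄ * (g s - α) * (g s - β) * (γ - g s) ^ 2 / (g s * s) / (γ - g s) ^ 2
        = (c₄ * (g s - α) * (g s - β) / g s) / s := by
      field_simp
    rw [heq, show C * s⁻¹ = C / s from (div_eq_mul_inv C s).symm]
    apply (div_le_div_iff_of_pos_right hspos).2
    have hnum : c₄ * (g s - α) * (g s - β) ≤ c₄ * (γ - α) * (γ - β) :=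
      mul_le_mul (mul_le_mul_of_nonneg_left hgαle hc₄pos.le) hgβle (by linarith)
        (mul_nonneg hc₄pos.le (by linarith))
    calc c₄ * (g s - α) * (g s - β) / g s
        ≤ c₄ * (γ - α) * (γ - β) / (γ/2) :=
          div_le_div₀ (mul_nonneg (mul_nonneg hc₄pos.le (by linarith)) (by linarith))
            hnum (by linarith) (by linarith)
      _ = C := hCdef.symm
  -- lower bound: D * (γ - g s)/s ≤ sqrt(deriv g s / s)
  have hsqrt_bound : ∀ s, s₁ ≤ s → D * (γ - g s) / s ≤ Real.sqrt (deriv g s / s) := by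
    intro s hs
    obtain ⟨hsIoi, hγ2, hgβ2, hgpos, hγg, hgαle, hgβle, hgαlb⟩ := hfacts s hs
    have hspos : (0:ℝ) < s := hsIoi
    apply Real.le_sqrt_of_sq_le
    have hD2le : D2 ≤ c₄ * (g s - α) * (g s - β) / g s := by
      rw [hD2def]
      refine div_le_div₀ (mul_nonneg (mul_nonneg hc₄pos.le (by linarith)) (by linarith))
        ?_ hgpos (by linarith [(hrange s hsIoi).2])
      exact mul_le_mul (mul_le_mul_of_nonneg_left hgαlb.le hc₄pos.le) hgβ2.le
        (by linarith) (mul_nonneg hc₄pos.le (by linarith))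
    have heq2 : c₄ * (g s - α) * (g s - β) / g s * ((γ - g s) ^ 2 / s ^ 2)
        = deriv g s / s := by
      rw [hgderiv s hs, div_mul_div_comm, div_div]
      ring
    calc (D * (γ - g s) / s) ^ 2 = D ^ 2 * ((γ - g s) ^ 2 / s ^ 2) := by ring
      _ = D2 * ((γ - g s) ^ 2 / s ^ 2) := by rw [hDsq]
      _ ≤ c₄ * (g s - α) * (g s - β) / g s * ((γ - g s) ^ 2 / s ^ 2) :=
          mul_le_mul_of_nonneg_right hD2le (by positivity)
      _ = deriv g s / s := heq2
  -- ψ := (γ - g)⁻¹ - C log is antitone on Ici s₁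
  set ψ : ℝ → ℝ := fun s => (γ - g s)⁻¹ - C * Real.log s with hψdef
  have hψd : ∀ s, s₁ ≤ s →
      HasDerivAt ψ (deriv g s / (γ - g s) ^ 2 - C * s⁻¹) s := by
    intro s hs
    obtain ⟨hsIoi, _, _, _, hγg, _, _, _⟩ := hfacts s hs
    have hspos : (0:ℝ) < s := hsIoi
    have h0 : HasDerivAt (fun x => γ - g x) (0 - deriv g s) s :=
      (hasDerivAt_const s γ).sub (hgd s hsIoi)
    have h1 := h0.inv hγg.ne'
    have h2 : HasDerivAt (fun x => C * Real.log x) (C * s⁻¹) s :=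
      (Real.hasDerivAt_log hspos.ne').const_mul C
    have h3 := h1.sub h2
    refine h3.congr_deriv ?_
    ring
  have hanti : AntitoneOn ψ (Ici s₁) := by
    apply antitoneOn_of_deriv_nonpos (convex_Ici s₁)
    · intro x hx
      exact (hψd x hx).continuousAt.continuousWithinAt
    · rw [interior_Ici]
      intro x hx
      exact (hψd x (le_of_lt hx)).differentiableAt.differentiableWithinAt
    · rw [interior_Ici]
      intro x hx
      rw [(hψd x (le_of_lt hx)).deriv]
      have := hC_bound x (le_of_lt hx)
      linarith
  set A : ℝ := (γ - g s₁)⁻¹ - C * Real.log s₁ with hAdef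
  have hub : ∀ s, s₁ ≤ s → (γ - g s)⁻¹ ≤ A + C * Real.log s := by
    intro s hs
    have := hanti (self_mem_Ici) (mem_Ici.2 hs) hs
    simp only [hψdef, hAdef] at this ⊢
    linarith
  have hApos : ∀ s, s₁ ≤ s → 0 < A + C * Real.log s := by
    intro s hs
    obtain ⟨_, _, _, _, hγg, _, _, _⟩ := hfacts s hs
    exact lt_of_lt_of_le (inv_pos.2 hγg) (hub s hs)
  have hkey : ∀ s, s₁ ≤ s → (A + C * Real.log s)⁻¹ ≤ γ - g s := by
    intro s hs
    obtain ⟨_, _, _, _, hγg, _, _, _⟩ := hfacts s hs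
    have := inv_anti₀ (inv_pos.2 hγg) (hub s hs)
    rwa [inv_inv] at this
  -- the antiderivative F
  set F : ℝ → ℝ := fun s => C⁻¹ * Real.log (A + C * Real.log s) with hFdef
  have hFd : ∀ s, s₁ ≤ s → HasDerivAt F ((s * (A + C * Real.log s))⁻¹) s := by
    intro s hs
    have hspos : (0:ℝ) < s := lt_of_lt_of_le hs₁0 hs
    have hpos := hApos s hs
    have h2 : HasDerivAt (fun x => A + C * Real.log x) (C * s⁻¹) s :=
      ((Real.hasDerivAt_log hspos.ne').const_mul C).const_add A
    have h3 := ((Real.hasDerivAt_log hpos.ne').comp s h2).const_mul C⁻¹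
    refine h3.congr_deriv ?_
    field_simp
  have hFtend : Tendsto (fun x => ‖F x‖) atTop atTop := by
    apply tendsto_norm_atTop_atTop.comp
    have h1 : Tendsto (fun s : ℝ => A + C * Real.log s) atTop atTop :=
      tendsto_atTop_add_const_left _ A (Real.tendsto_log_atTop.const_mul_atTop hC)
    exact (Real.tendsto_log_atTop.comp h1).const_mul_atTop (inv_pos.2 hC)
  have hbigO : deriv F =O[atTop] (fun s => Real.sqrt (deriv g s / s)) := by
    rw [Asymptotics.isBigO_iff]
    refine ⟨D⁻¹, ?_⟩
    filter_upwards [eventually_ge_atTop s₁] with s hs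
    have hspos : (0:ℝ) < s := lt_of_lt_of_le hs₁0 hs
    have hpos := hApos s hs
    rw [(hFd s hs).deriv]
    have hx : (0:ℝ) < s * (A + C * Real.log s) := mul_pos hspos hpos
    have h4 : (s * (A + C * Real.log s))⁻¹ ≤ (γ - g s) / s := by
      rw [mul_comm s _, mul_inv, ← div_eq_mul_inv]
      exact (div_le_div_iff_of_pos_right hspos).2 (hkey s hs)
    have h5 : D * (s * (A + C * Real.log s))⁻¹ ≤ Real.sqrt (deriv g s / s) := by
      calc D * (s * (A + C * Real.log s))⁻¹ ≤ D * ((γ - g s) / s) :=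
            mul_le_mul_of_nonneg_left h4 hD.le
        _ = D * (γ - g s) / s := (mul_div_assoc _ _ _).symm
        _ ≤ _ := hsqrt_bound s hs
    rw [Real.norm_eq_abs, Real.norm_eq_abs, abs_of_pos (inv_pos.2 hx),
      abs_of_nonneg (Real.sqrt_nonneg _)]
    calc (s * (A + C * Real.log s))⁻¹
        = D⁻¹ * (D * (s * (A + C * Real.log s))⁻¹) := by field_simp
      _ ≤ D⁻¹ * Real.sqrt (deriv g s / s) :=
          mul_le_mul_of_nonneg_left h5 (inv_pos.2 hD).le
  exact not_integrableOn_of_tendsto_norm_atTop_of_deriv_isBigO_filter atTop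
    (Ioi_mem_atTop s₀)
    ((eventually_ge_atTop s₁).mono fun s hs => (hFd s hs).differentiableAt)
    hFtend hbigO hint
end

section
/- Suppose c₄ ≠ 0, c₀ ≠ 0, and the quartic c₄x⁴ + c₃x³ + x² + c₁x + c₀ has real roots α, α, α, β with α < β (triple root at α). Then there is no smooth strictly increasing g : (0,∞) → ℝ with 0 < lim_{s→0⁺} g = α, lim_{s→∞} g = β, satisfying s·g(s)·g'(s) = c₄(g−α)³(g−β): indeed positivity of c₄(x−α)³(x−β) on (α,β) forces c₄ < 0, while comparing the x² coefficient gives 1 = c₄·(3α² + 3αβ), contradicting 0 < α < β. -/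
open Set Filter

theorem stmt_18 (c₀ c₁ c₃ c₄ α β : ℝ) (hc₄ : c₄ ≠ 0) (hc₀ : c₀ ≠ 0) (hαβ : α < β)
    (hfact : ∀ x : ℝ,
      c₄ * x ^ 4 + c₃ * x ^ 3 + x ^ 2 + c₁ * x + c₀ = c₄ * (x - α) ^ 3 * (x - β)) :
    ¬ ∃ g : ℝ → ℝ,
      ContDiffOn ℝ (⊤ : ℕ∞) g (Ioi 0) ∧ StrictMonoOn g (Ioi 0) ∧ 0 < α ∧
      Tendsto g (nhdsWithin 0 (Ioi 0)) (nhds α) ∧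
      Tendsto g atTop (nhds β) ∧
      ∀ s ∈ Ioi (0:ℝ),
        s * g s * deriv g s = c₄ * (g s - α) ^ 3 * (g s - β) := by
  rintro ⟨g, hsm, hmono, hα, h0, hinf, hode⟩
  -- x² coefficient: 1 = c₄ * (3α² + 3αβ)
  have key : (1:ℝ) = c₄ * (3 * α ^ 2 + 3 * α * β) := by
    linear_combination (-(hfact 2) - (hfact (-2)) + 16 * (hfact 1) + 16 * (hfact (-1))
      - 30 * (hfact 0)) / 24
  have hc4pos : 0 < c₄ := by nlinarith [mul_pos hα hα, mul_pos hα (hα.trans hαβ)]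
  -- bounds on g 1
  have h1 : (1:ℝ) ∈ Ioi (0:ℝ) := by norm_num
  have hge : α ≤ g (1/2) := by
    refine le_of_tendsto h0 ?_
    filter_upwards [self_mem_nhdsWithin, Ioo_mem_nhdsGT_of_mem (by norm_num : (0:ℝ) ∈ Ico 0 (1/2))]
      with u hu hu2
    exact (hmono hu (by norm_num) hu2.2).le
  have hglt : α < g 1 := lt_of_le_of_lt hge (hmono (by norm_num) h1 (by norm_num))
  have hle : g 2 ≤ β := by
    refine ge_of_tendsto hinf ?_
    filter_upwards [eventually_gt_atTop 2] with t ht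
    exact (hmono (by norm_num) (lt_trans (by norm_num) ht) ht).le
  have hgub : g 1 < β := lt_of_lt_of_le (hmono h1 (by norm_num) (by norm_num)) hle
  -- derivative nonneg at 1
  have hdiff : DifferentiableAt ℝ g 1 :=
    (hsm.contDiffAt (isOpen_Ioi.mem_nhds h1)).differentiableAt (by simp)
  have hderiv : 0 ≤ deriv g 1 := by
    have hslope : Tendsto (slope g 1) (nhdsWithin 1 (Ioi 1)) (nhds (deriv g 1)) :=
      ((hasDerivAt_iff_tendsto_slope.mp hdiff.hasDerivAt).mono_left
        (nhdsWithin_mono _ (fun x hx => ne_of_gt hx)))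
    refine ge_of_tendsto hslope ?_
    filter_upwards [self_mem_nhdsWithin] with t ht
    have : g 1 < g t := hmono h1 (lt_trans (by norm_num : (0:ℝ) < 1) ht) ht
    have h1t : (0:ℝ) < t - 1 := by linarith [mem_Ioi.mp ht]
    rw [slope_def_field]
    exact le_of_lt (div_pos (by linarith) h1t)
  -- contradiction with ODE at s = 1
  have heq := hode 1 h1
  have hrhs : c₄ * (g 1 - α) ^ 3 * (g 1 - β) < 0 :=
    mul_neg_of_pos_of_neg (mul_pos hc4pos (pow_pos (by linarith) 3)) (by linarith)
  have hlhs : 0 ≤ (1:ℝ) * g 1 * deriv g 1 := by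
    have : 0 < g 1 := lt_trans hα hglt
    positivity
  linarith [heq ▸ hlhs]
end
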